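/- arXiv:2507.01044 — 7 statements merged into one kernel-verified Lean document; each statement's English description precedes it below -/
import Mathlib

section
/- Let A ⊆ ℝ^d be a nonempty compact set and let A_n denote the n-fold Minkowski sum of A with itself. Then the sequence (1/n)·A_n converges in the Hausdorff metric to the closed convex hull of A. -/
open Pointwise Filter

/-- n-fold Minkowski sum of a set with itself (with `msum A 1 = A`). -/
def msum {E : Type*} [AddCommMonoid E] (A : Set E) : ℕ → Set E
  | 0 => {0}
  | 1 => A
  | (n+1) => msum A n + A

lemma msum_succ {E : Type*} [AddCommMonoid E] (A : Set E) (n : ℕ) :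
    msum A (n + 1) = msum A n + A := by
  match n with
  | 0 =>
    show A = ({0} : Set E) + A
    rw [Set.singleton_zero, zero_add]
  | (n+1) => rfl

lemma add_mem_msum {E : Type*} [AddCommMonoid E] {A : Set E} {x y : E} {m n : ℕ}
    (hx : x ∈ msum A m) (hy : y ∈ msum A n) : x + y ∈ msum A (m + n) := by
  induction n generalizing y with
  | zero =>
    have hy0 : y = 0 := hy
    simpa [hy0]
  | succ n ih =>
    rw [msum_succ] at hy
    obtain ⟨y', hy', a, ha, rfl⟩ := hy
    have h : x + (y' + a) = (x + y') + a := by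
      rw [add_assoc]
    rw [h, show m + (n + 1) = (m + n) + 1 from rfl, msum_succ]
    exact Set.add_mem_add (ih hy') ha

lemma nsmul_mem_msum {E : Type*} [AddCommMonoid E] {A : Set E} {a : E} (ha : a ∈ A) :
    ∀ k : ℕ, k • a ∈ msum A k := by
  intro k
  induction k with
  | zero => simp [msum]
  | succ k ih =>
    rw [succ_nsmul]
    exact add_mem_msum ih (show a ∈ msum A 1 from ha)

lemma sum_mem_msum {E : Type*} [AddCommMonoid E] {A : Set E} {ι : Type*} (t : Finset ι)
    (k : ι → ℕ) (a : ι → E) (ha : ∀ i ∈ t, a i ∈ A) :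
    (∑ i ∈ t, k i • a i) ∈ msum A (∑ i ∈ t, k i) := by
  classical
  induction t using Finset.induction with
  | empty => simp [msum]
  | @insert j s hnot ih =>
    rw [Finset.sum_insert hnot, Finset.sum_insert hnot]
    exact add_mem_msum (nsmul_mem_msum (ha j (Finset.mem_insert_self j s)) (k j))
      (ih fun i hi => ha i (Finset.mem_insert_of_mem hi))

lemma msum_subset_smul_convexHull {E : Type*} [AddCommGroup E] [Module ℝ E] (A : Set E) :
    ∀ n : ℕ, msum A (n + 1) ⊆ ((n + 1 : ℕ) : ℝ) • (convexHull ℝ A) := by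
  intro n
  induction n with
  | zero =>
    show A ⊆ ((1 : ℕ) : ℝ) • (convexHull ℝ A)
    rw [Nat.cast_one, one_smul]
    exact subset_convexHull ℝ A
  | succ n ih =>
    rw [msum_succ]
    have h1 : A ⊆ (1 : ℝ) • convexHull ℝ A := by
      rw [one_smul]; exact subset_convexHull ℝ A
    calc msum A (n + 1) + A
        ⊆ ((n + 1 : ℕ) : ℝ) • convexHull ℝ A + (1 : ℝ) • convexHull ℝ A :=
          Set.add_subset_add ih h1
      _ = (((n + 1 : ℕ) : ℝ) + 1) • convexHull ℝ A := by
          rw [← (convex_convexHull ℝ A).add_smul (by positivity) zero_le_one]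
      _ = ((n + 1 + 1 : ℕ) : ℝ) • convexHull ℝ A := by norm_num

/-- Key pointwise approximation. -/
lemma approx_msum {E : Type*} [NormedAddCommGroup E] [NormedSpace ℝ E] {A : Set E} {C : ℝ}
    (hC : ∀ a ∈ A, ‖a‖ ≤ C) {x : E} (hx : x ∈ convexHull ℝ A) {ε : ℝ} (hε : 0 < ε) :
    ∃ N : ℕ, 1 ≤ N ∧ ∀ n, N ≤ n → ∃ z ∈ msum A n, ‖(n : ℝ)⁻¹ • z - x‖ ≤ ε := by
  classical
  rw [convexHull_eq] at hx
  obtain ⟨ι, t, w, a, hw0, hw1, haA, hxc⟩ := hx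
  have hxsum : x = ∑ i ∈ t, w i • a i := by
    rw [← hxc, Finset.centerMass_eq_of_sum_1 _ _ hw1]
  have htne : t.Nonempty := by
    rcases Finset.eq_empty_or_nonempty t with h | h
    · exfalso; rw [h] at hw1; simp at hw1
    · exact h
  obtain ⟨i0, hi0⟩ := htne
  set m : ℕ := t.card with hm
  have hm1 : 1 ≤ m := Finset.card_pos.mpr ⟨i0, hi0⟩
  have hm1' : (1 : ℝ) ≤ (m : ℝ) := by exact_mod_cast hm1
  have hC0 : 0 ≤ C := (norm_nonneg _).trans (hC _ (haA i0 hi0))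
  set B : ℝ := (m : ℝ) * ((m : ℝ) * C) with hB
  have hBnn : 0 ≤ B := by positivity
  refine ⟨max 1 (⌈B / ε⌉₊ + 1), le_max_left _ _, fun n hn => ?_⟩
  have hn1 : 1 ≤ n := le_trans (le_max_left _ _) hn
  have hnpos : (0 : ℝ) < n := by exact_mod_cast hn1
  -- integer weights
  set S : ℕ := ∑ j ∈ t.erase i0, ⌊(n : ℝ) * w j⌋₊ with hS
  have hwsub : ∑ j ∈ t.erase i0, w j ≤ 1 := by
    rw [← hw1]
    exact Finset.sum_le_sum_of_subset_of_nonneg (Finset.erase_subset _ _)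
      (fun i hi _ => hw0 i hi)
  have hfloor_le : ∀ j ∈ t, ((⌊(n : ℝ) * w j⌋₊ : ℝ)) ≤ (n : ℝ) * w j := fun j hj =>
    Nat.floor_le (mul_nonneg hnpos.le (hw0 j hj))
  have hfloor_gt : ∀ j ∈ t, (n : ℝ) * w j < (⌊(n : ℝ) * w j⌋₊ : ℝ) + 1 := fun j _ =>
    Nat.lt_floor_add_one _
  have hSn : S ≤ n := by
    have h : (S : ℝ) ≤ (n : ℝ) := by
      rw [hS]
      push_cast
      calc (∑ j ∈ t.erase i0, (⌊(n : ℝ) * w j⌋₊ : ℝ))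
          ≤ ∑ j ∈ t.erase i0, (n : ℝ) * w j :=
            Finset.sum_le_sum (fun j hj => hfloor_le j (Finset.mem_of_mem_erase hj))
        _ = (n : ℝ) * ∑ j ∈ t.erase i0, w j := by rw [Finset.mul_sum]
        _ ≤ (n : ℝ) * 1 := mul_le_mul_of_nonneg_left hwsub hnpos.le
        _ = (n : ℝ) := mul_one _
    exact_mod_cast h
  set k : ι → ℕ := fun i => if i = i0 then n - S else ⌊(n : ℝ) * w i⌋₊ with hk
  have hksum : ∑ i ∈ t, k i = n := by
    rw [← Finset.add_sum_erase t k hi0]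
    have h1 : k i0 = n - S := if_pos rfl
    have h2 : ∑ i ∈ t.erase i0, k i = S :=
      Finset.sum_congr rfl (fun i hi => if_neg (Finset.ne_of_mem_erase hi))
    rw [h1, h2, Nat.sub_add_cancel hSn]
  refine ⟨∑ i ∈ t, k i • a i, hksum ▸ sum_mem_msum t k a haA, ?_⟩
  -- rewrite the difference
  have hdiff : (n : ℝ)⁻¹ • (∑ i ∈ t, k i • a i) - x
      = ∑ i ∈ t, ((n : ℝ)⁻¹ * (k i : ℝ) - w i) • a i := by
    rw [hxsum, Finset.smul_sum, ← Finset.sum_sub_distrib]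
    refine Finset.sum_congr rfl fun i _ => ?_
    rw [sub_smul, mul_smul, Nat.cast_smul_eq_nsmul]
  -- termwise bound on erase
  have hterm : ∀ j ∈ t.erase i0, |w j - (⌊(n : ℝ) * w j⌋₊ : ℝ) / n| ≤ 1 / n := by
    intro j hj
    have hjt := Finset.mem_of_mem_erase hj
    have h1 : (⌊(n : ℝ) * w j⌋₊ : ℝ) / n ≤ w j := by
      rw [div_le_iff₀ hnpos]
      exact le_of_le_of_eq (hfloor_le j hjt) (mul_comm _ _)
    have h2 : w j - (⌊(n : ℝ) * w j⌋₊ : ℝ) / n ≤ 1 / n := by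
      rw [sub_le_iff_le_add, ← add_div, le_div_iff₀ hnpos]
      have hcm : (n : ℝ) * w j = w j * (n : ℝ) := mul_comm _ _
      linarith [hfloor_gt j hjt]
    rw [abs_le]
    constructor
    · have : (0 : ℝ) ≤ 1 / n := by positivity
      linarith
    · exact h2
  -- the key per-index bound
  have key : ∀ i ∈ t, |(n : ℝ)⁻¹ * (k i : ℝ) - w i| ≤ (m : ℝ) / n := by
    intro i hi
    by_cases hii : i = i0
    · subst hii
      have hki : k i = n - S := if_pos rfl
      have h1 : (k i : ℝ) = (n : ℝ) - (S : ℝ) := by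
        rw [hki]; exact Nat.cast_sub hSn
      have hw0' : w i = 1 - ∑ j ∈ t.erase i, w j := by
        rw [← hw1, ← Finset.add_sum_erase t w hi]; ring
      have hScast : (S : ℝ) = ∑ j ∈ t.erase i, (⌊(n : ℝ) * w j⌋₊ : ℝ) := by
        rw [hS]; push_cast; rfl
      have heq : (n : ℝ)⁻¹ * (k i : ℝ) - w i
          = ∑ j ∈ t.erase i, (w j - (⌊(n : ℝ) * w j⌋₊ : ℝ) / n) := by
        rw [h1, hw0', hScast, Finset.sum_sub_distrib, ← Finset.sum_div]
        field_simp
        ring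
      rw [heq]
      calc |∑ j ∈ t.erase i, (w j - (⌊(n : ℝ) * w j⌋₊ : ℝ) / n)|
          ≤ ∑ j ∈ t.erase i, |w j - (⌊(n : ℝ) * w j⌋₊ : ℝ) / n| :=
            Finset.abs_sum_le_sum_abs _ _
        _ ≤ ∑ _j ∈ t.erase i, 1 / (n : ℝ) := Finset.sum_le_sum hterm
        _ = ((t.erase i).card : ℝ) * (1 / n) := by
            rw [Finset.sum_const, nsmul_eq_mul]
        _ ≤ (m : ℝ) * (1 / n) := by
            have : ((t.erase i).card : ℝ) ≤ (m : ℝ) := by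
              exact_mod_cast Finset.card_le_card (Finset.erase_subset _ _)
            have h1n : (0 : ℝ) ≤ 1 / n := by positivity
            exact mul_le_mul_of_nonneg_right this h1n
        _ = (m : ℝ) / n := by ring
    · have hkeq : (k i : ℝ) = (⌊(n : ℝ) * w i⌋₊ : ℝ) := by
        rw [hk]; simp only [if_neg hii]
      have h : |(n : ℝ)⁻¹ * (k i : ℝ) - w i| = |w i - (⌊(n : ℝ) * w i⌋₊ : ℝ) / n| := by
        rw [hkeq, abs_sub_comm, inv_mul_eq_div]
      rw [h]
      calc |w i - (⌊(n : ℝ) * w i⌋₊ : ℝ) / n| ≤ 1 / n :=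
            hterm i (Finset.mem_erase.mpr ⟨hii, hi⟩)
        _ ≤ (m : ℝ) / n := by gcongr
  rw [hdiff]
  calc ‖∑ i ∈ t, ((n : ℝ)⁻¹ * (k i : ℝ) - w i) • a i‖
      ≤ ∑ i ∈ t, ‖((n : ℝ)⁻¹ * (k i : ℝ) - w i) • a i‖ := norm_sum_le _ _
    _ ≤ ∑ _i ∈ t, ((m : ℝ) / n) * C := by
        refine Finset.sum_le_sum fun i hi => ?_
        rw [norm_smul, Real.norm_eq_abs]
        exact mul_le_mul (key i hi) (hC _ (haA i hi)) (norm_nonneg _) (by positivity)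
    _ = (m : ℝ) * (((m : ℝ) / n) * C) := by
        rw [Finset.sum_const, nsmul_eq_mul, hm]
    _ = B / n := by rw [hB]; ring
    _ ≤ ε := by
        have h1 : (⌈B / ε⌉₊ : ℝ) + 1 ≤ (n : ℝ) := by
          exact_mod_cast le_trans (le_max_right _ _) hn
        have h2 : B / ε ≤ (n : ℝ) := le_trans (Nat.le_ceil _) (by linarith)
        rw [div_le_iff₀ hε] at h2
        rw [div_le_iff₀ hnpos]
        nlinarith

theorem stmt2 {d : ℕ} (A : Set (EuclideanSpace ℝ (Fin d))) (hA : IsCompact A)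
    (hAne : A.Nonempty) :
    Tendsto (fun n : ℕ =>
        EMetric.hausdorffEdist (((n : ℝ)⁻¹) • msum A n) (closure (convexHull ℝ A)))
      atTop (nhds 0) := by
  classical
  set K : Set (EuclideanSpace ℝ (Fin d)) := closure (convexHull ℝ A) with hK
  have hconvb : Bornology.IsBounded (convexHull ℝ A) := isBounded_convexHull.mpr hA.isBounded
  have hKcomp : IsCompact K :=
    Metric.isCompact_of_isClosed_isBounded isClosed_closure hconvb.closure
  obtain ⟨C, hC⟩ := hA.isBounded.exists_norm_le
  rw [ENNReal.tendsto_atTop_zero]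
  intro ε hε
  obtain ⟨δ, hδ0, hδε⟩ : ∃ δ : ℝ, 0 < δ ∧ ENNReal.ofReal δ ≤ ε := by
    rcases eq_or_ne ε ⊤ with rfl | hne
    · exact ⟨1, one_pos, le_top⟩
    · exact ⟨ε.toReal, ENNReal.toReal_pos hε.ne' hne,
        by rw [ENNReal.ofReal_toReal hne]⟩
  have h3 : 0 < δ / 3 := by linarith
  obtain ⟨F, hFK, hFfin, hFcov⟩ := finite_cover_balls_of_compact hKcomp h3
  have hchoice : ∀ y : EuclideanSpace ℝ (Fin d), y ∈ F → ∃ N : ℕ, ∀ n, N ≤ n →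
      ∃ z ∈ msum A n, dist ((n : ℝ)⁻¹ • z) y ≤ 2 * (δ / 3) := by
    intro y hy
    have hyK : y ∈ K := hFK hy
    obtain ⟨x, hxhull, hxy⟩ := Metric.mem_closure_iff.mp hyK (δ / 3) h3
    obtain ⟨N, _hN1, hN⟩ := approx_msum hC hxhull h3
    refine ⟨N, fun n hn => ?_⟩
    obtain ⟨z, hz, hzx⟩ := hN n hn
    refine ⟨z, hz, ?_⟩
    have htri : dist ((n : ℝ)⁻¹ • z) y ≤ dist ((n : ℝ)⁻¹ • z) x + dist x y :=
      dist_triangle _ _ _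
    have h1 : dist ((n : ℝ)⁻¹ • z) x ≤ δ / 3 := by rwa [dist_eq_norm]
    have h2 : dist x y < δ / 3 := by rwa [dist_comm] at hxy
    linarith
  choose! N hNs using hchoice
  refine ⟨max 1 (hFfin.toFinset.sup N), fun n hn => ?_⟩
  have hn1 : 1 ≤ n := le_trans (le_max_left _ _) hn
  have hnpos : (0 : ℝ) < n := by exact_mod_cast hn1
  refine le_trans (EMetric.hausdorffEdist_le_of_mem_edist ?_ ?_) hδε
  · -- forward inclusion: (1/n) msum ⊆ K
    intro x hx
    refine ⟨x, ?_, by simp⟩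
    obtain ⟨z, hz, rfl⟩ := hx
    obtain ⟨n', rfl⟩ : ∃ n', n = n' + 1 := ⟨n - 1, by omega⟩
    obtain ⟨y, hy, rfl⟩ := msum_subset_smul_convexHull A n' hz
    have hne : (((n' + 1 : ℕ) : ℝ)) ≠ 0 := by positivity
    have heq : ((n' + 1 : ℕ) : ℝ)⁻¹ • ((n' + 1 : ℕ) : ℝ) • y = y := by
      rw [smul_smul, inv_mul_cancel₀ hne, one_smul]
    show ((n' + 1 : ℕ) : ℝ)⁻¹ • ((n' + 1 : ℕ) : ℝ) • y ∈ K
    rw [heq]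
    exact subset_closure hy
  · -- backward: every point of K is close to (1/n) msum
    intro y hyK
    have := hFcov hyK
    rw [Set.mem_iUnion₂] at this
    obtain ⟨y₀, hy₀F, hyball⟩ := this
    have hsup : N y₀ ≤ hFfin.toFinset.sup N :=
      Finset.le_sup (hFfin.mem_toFinset.mpr hy₀F)
    have hn' : N y₀ ≤ n := le_trans hsup (le_trans (le_max_right _ _) hn)
    obtain ⟨z, hz, hzy₀⟩ := hNs y₀ hy₀F n hn'
    refine ⟨(n : ℝ)⁻¹ • z, Set.smul_mem_smul_set hz, ?_⟩
    rw [edist_dist]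
    have hdist : dist y ((n : ℝ)⁻¹ • z) ≤ δ := by
      have hb : dist y y₀ < δ / 3 := Metric.mem_ball.mp hyball
      have htri : dist y ((n : ℝ)⁻¹ • z) ≤ dist y y₀ + dist y₀ ((n : ℝ)⁻¹ • z) :=
        dist_triangle _ _ _
      have h2 : dist y₀ ((n : ℝ)⁻¹ • z) ≤ 2 * (δ / 3) := by
        rw [dist_comm]; exact hzy₀
      linarith
    exact ENNReal.ofReal_le_ofReal hdist
end

section
/- (Shapley–Folkman) Let A_1, …, A_n be nonempty subsets of ℝ^d and let x ∈ conv(A_1) + conv(A_2) + ⋯ + conv(A_n). Then x can be written as x = Σ_{i=1}^n x_i where x_i ∈ conv(A_i) for all i, and x_i ∈ A_i for all but at most d indices i. -/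
open Pointwise

open scoped Classical

set_option maxHeartbeats 1000000 in
/-- Key inductive step for Shapley–Folkman: strong induction on the total size of the
essential supports of the weight functions. -/
theorem sf_key {d n : ℕ} (A : Fin n → Set (EuclideanSpace ℝ (Fin d)))
    (t : Fin n → Finset (EuclideanSpace ℝ (Fin d)))
    (ht : ∀ i, ↑(t i) ⊆ A i)
    (x : EuclideanSpace ℝ (Fin d)) (N : ℕ) :
    ∀ f : Fin n → EuclideanSpace ℝ (Fin d) → ℝ,
      (∀ i, ∀ a ∈ t i, 0 ≤ f i a) →
      (∀ i, ∑ a ∈ t i, f i a = 1) →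
      (∑ i, ∑ a ∈ t i, f i a • a = x) →
      (∑ i, ((t i).filter (fun a => f i a ≠ 0)).card = N) →
      ∃ y : Fin n → EuclideanSpace ℝ (Fin d),
        (∀ i, y i ∈ convexHull ℝ (A i)) ∧ x = ∑ i, y i ∧
        Set.ncard {i | y i ∉ A i} ≤ d := by
  induction N using Nat.strong_induction_on with
  | _ N IH =>
  intro f hf0 hf1 hfx hN
  set s : Fin n → Finset (EuclideanSpace ℝ (Fin d)) :=
    fun i => (t i).filter (fun a => f i a ≠ 0) with hs
  have hsi : ∀ i, s i = (t i).filter (fun a => f i a ≠ 0) := fun i => rfl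
  have hst : ∀ i, s i ⊆ t i := fun i => Finset.filter_subset _ _
  have hssum : ∀ i, ∑ a ∈ s i, f i a = 1 := by
    intro i
    rw [hsi, Finset.sum_filter_ne_zero]
    exact hf1 i
  have hsne : ∀ i, (s i).Nonempty := by
    intro i
    rcases Finset.eq_empty_or_nonempty (s i) with h | h
    · exfalso
      have := hssum i
      rw [h] at this
      simp at this
    · exact h
  have hspos : ∀ i, ∀ a ∈ s i, 0 < f i a := by
    intro i a ha
    rw [hsi, Finset.mem_filter] at ha
    exact lt_of_le_of_ne (hf0 i a ha.1) (Ne.symm ha.2)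
  set S : Finset (Fin n) := Finset.univ.filter (fun i => 2 ≤ (s i).card) with hS
  by_cases hSd : S.card ≤ d
  · -- few big supports: done
    refine ⟨fun i => ∑ a ∈ t i, f i a • a, ?_, hfx.symm, ?_⟩
    · intro i
      have h1 : (t i).centerMass (f i) id ∈ convexHull ℝ (A i) :=
        Finset.centerMass_mem_convexHull _ (hf0 i) (by rw [hf1 i]; norm_num)
          (fun a ha => ht i ha)
      rw [Finset.centerMass_eq_of_sum_1 _ _ (hf1 i)] at h1
      simpa using h1
    · have hsub : {i | (∑ a ∈ t i, f i a • a) ∉ A i} ⊆ ↑S := by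
        intro i hi
        simp only [Set.mem_setOf_eq] at hi
        by_contra hiS
        have h2 : ¬ 2 ≤ (s i).card := by
          intro h
          exact hiS (Finset.mem_coe.mpr (Finset.mem_filter.mpr ⟨Finset.mem_univ i, h⟩))
        have h3 := (hsne i).card_pos
        have hcard : (s i).card = 1 := by omega
        obtain ⟨a₀, ha₀⟩ := Finset.card_eq_one.mp hcard
        have ha₀s : a₀ ∈ s i := by rw [ha₀]; exact Finset.mem_singleton_self a₀
        have hfa₀ : f i a₀ = 1 := by
          have := hssum i
          rw [ha₀, Finset.sum_singleton] at this
          exact this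
        have hya : (∑ a ∈ t i, f i a • a) = a₀ := by
          rw [← Finset.sum_filter_of_ne (p := fun a => f i a ≠ 0)
            (fun a _ hne h0 => hne (by rw [h0, zero_smul]))]
          rw [← hsi i, ha₀, Finset.sum_singleton, hfa₀, one_smul]
        exact hi (hya ▸ ht i (hst i ha₀s))
      calc Set.ncard {i | (∑ a ∈ t i, f i a • a) ∉ A i} ≤ S.card := by
            have := Set.ncard_le_ncard hsub S.finite_toSet
            rwa [Set.ncard_coe_finset] at this
        _ ≤ d := hSd
  · -- many big supports: exchange argument
    push_neg at hSd
    have hpair : ∀ i ∈ S, ∃ q : (EuclideanSpace ℝ (Fin d)) × (EuclideanSpace ℝ (Fin d)),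
        q.1 ∈ s i ∧ q.2 ∈ s i ∧ q.1 ≠ q.2 := by
      intro i hiS
      have h2 : 1 < (s i).card := (Finset.mem_filter.mp hiS).2
      obtain ⟨a, ha, b, hb, hab⟩ := Finset.one_lt_card.mp h2
      exact ⟨(a, b), ha, hb, hab⟩
    choose! p hp1 hp2 hp3 using hpair
    have hnli : ¬ LinearIndependent ℝ
        (fun j : ↥S => ((p j).1 - (p j).2 : EuclideanSpace ℝ (Fin d))) := by
      intro h
      have hcard := h.fintype_card_le_finrank
      rw [finrank_euclideanSpace_fin, Fintype.card_coe] at hcard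
      omega
    obtain ⟨g, hgsum, j₀, hgj₀⟩ := Fintype.not_linearIndependent_iff.mp hnli
    set c : Fin n → ℝ := fun i => if h : i ∈ S then g ⟨i, h⟩ else 0 with hc
    have hcS : ∀ i, c i ≠ 0 → i ∈ S := by
      intro i h
      by_contra hiS
      exact h (by simp [hc, hiS])
    have hcval : ∀ (j : ↥S), c j = g j := fun j => by simp [hc, j.2]
    have hrelS : ∑ i ∈ S, c i • ((p i).1 - (p i).2) = 0 := by
      calc ∑ i ∈ S, c i • ((p i).1 - (p i).2)
          = ∑ j : ↥S, c j • ((p j).1 - (p j).2) :=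
            (Finset.sum_coe_sort S (fun i => c i • ((p i).1 - (p i).2))).symm
        _ = ∑ j : ↥S, g j • ((p j).1 - (p j).2) := by
            refine Finset.sum_congr rfl fun j _ => by rw [hcval]
        _ = 0 := hgsum
    have hrel : ∑ i, c i • ((p i).1 - (p i).2) = 0 := by
      rw [← Finset.sum_subset (Finset.subset_univ S) (fun i _ hiS => by
        have hci : c i = 0 := by simp [hc, hiS]
        rw [hci, zero_smul])]
      exact hrelS
    set D : Finset (Fin n) := S.filter (fun i => c i ≠ 0) with hD
    have hDne : D.Nonempty := by
      refine ⟨(j₀ : Fin n), ?_⟩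
      rw [hD, Finset.mem_filter]
      exact ⟨j₀.2, by rw [hcval j₀]; exact hgj₀⟩
    set r : Fin n → ℝ :=
      fun i => if 0 < c i then f i (p i).2 / c i else f i (p i).1 / (- c i) with hr
    obtain ⟨i₀, hi₀D, hmin⟩ := D.exists_min_image r hDne
    set t₀ : ℝ := r i₀ with ht₀def
    have hDS : ∀ i ∈ D, i ∈ S := fun i hi => (Finset.mem_filter.mp hi).1
    have hDc : ∀ i ∈ D, c i ≠ 0 := fun i hi => (Finset.mem_filter.mp hi).2
    have hfa : ∀ i ∈ S, 0 < f i (p i).1 := fun i hi => hspos i _ (hp1 i hi)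
    have hfb : ∀ i ∈ S, 0 < f i (p i).2 := fun i hi => hspos i _ (hp2 i hi)
    have hrpos : ∀ i ∈ D, 0 < r i := by
      intro i hi
      rw [hr]
      by_cases h : 0 < c i
      · simp only [if_pos h]
        exact div_pos (hfb i (hDS i hi)) h
      · simp only [if_neg h]
        have hneg : c i < 0 := lt_of_le_of_ne (not_lt.mp h) (hDc i hi)
        exact div_pos (hfa i (hDS i hi)) (by linarith)
    have ht₀ : 0 < t₀ := hrpos i₀ hi₀D
    set f' : Fin n → EuclideanSpace ℝ (Fin d) → ℝ := fun i z =>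
      f i z + (t₀ * c i) *
        ((if z = (p i).1 then 1 else 0) - (if z = (p i).2 then 1 else 0)) with hf'
    have h'0 : ∀ i, ∀ z ∈ t i, 0 ≤ f' i z := by
      intro i z hz
      simp only [hf']
      by_cases hci : c i = 0
      · simpa [hci] using hf0 i z hz
      · have hiS : i ∈ S := hcS i hci
        have hiD : i ∈ D := Finset.mem_filter.mpr ⟨hiS, hci⟩
        have hne := hp3 i hiS
        have ht₀r : t₀ ≤ r i := hmin i hiD
        by_cases hza : z = (p i).1
        · rw [if_pos hza, if_neg (by rw [hza]; exact hne)]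
          by_cases hc0 : 0 < c i
          · have := hf0 i z hz
            nlinarith
          · have hcneg : c i < 0 := lt_of_le_of_ne (not_lt.mp hc0) hci
            have hr' : t₀ ≤ f i (p i).1 / (- c i) := by
              rw [hr] at ht₀r
              simpa [if_neg hc0] using ht₀r
            have key : t₀ * (- c i) ≤ f i (p i).1 :=
              (le_div_iff₀ (by linarith)).mp hr'
            rw [hza]
            nlinarith
        · by_cases hzb : z = (p i).2
          · rw [if_neg hza, if_pos hzb]
            by_cases hc0 : 0 < c i
            · have hr' : t₀ ≤ f i (p i).2 / c i := by
                rw [hr] at ht₀r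
                simpa [if_pos hc0] using ht₀r
              have key : t₀ * c i ≤ f i (p i).2 := (le_div_iff₀ hc0).mp hr'
              rw [hzb]
              nlinarith
            · have hcneg : c i < 0 := lt_of_le_of_ne (not_lt.mp hc0) hci
              have := hf0 i z hz
              nlinarith
          · rw [if_neg hza, if_neg hzb]
            simpa using hf0 i z hz
    have h'1 : ∀ i, ∑ z ∈ t i, f' i z = 1 := by
      intro i
      simp only [hf']
      rw [Finset.sum_add_distrib, hf1 i, ← Finset.mul_sum]
      by_cases hci : c i = 0
      · simp [hci]
      · have hiS := hcS i hci
        have hat : (p i).1 ∈ t i := hst i (hp1 i hiS)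
        have hbt : (p i).2 ∈ t i := hst i (hp2 i hiS)
        rw [Finset.sum_sub_distrib,
          Finset.sum_ite_eq' (t i) (p i).1 (fun _ => (1 : ℝ)),
          Finset.sum_ite_eq' (t i) (p i).2 (fun _ => (1 : ℝ)),
          if_pos hat, if_pos hbt]
        ring
    have hrow : ∀ i, ∑ z ∈ t i, f' i z • z
        = (∑ z ∈ t i, f i z • z) + (t₀ * c i) • ((p i).1 - (p i).2) := by
      intro i
      by_cases hci : c i = 0
      · simp [hf', hci]
      · have hiS := hcS i hci
        have hat : (p i).1 ∈ t i := hst i (hp1 i hiS)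
        have hbt : (p i).2 ∈ t i := hst i (hp2 i hiS)
        simp only [hf', add_smul]
        rw [Finset.sum_add_distrib]
        congr 1
        have hterm : ∀ z : EuclideanSpace ℝ (Fin d),
            ((t₀ * c i) * ((if z = (p i).1 then (1:ℝ) else 0)
              - (if z = (p i).2 then 1 else 0))) • z
            = (t₀ * c i) • ((if z = (p i).1 then z else 0)
              - (if z = (p i).2 then z else 0)) := by
          intro z
          rw [mul_smul]
          congr 1
          rw [sub_smul]
          congr 1 <;> split <;> simp
        rw [Finset.sum_congr rfl (fun z _ => hterm z), ← Finset.smul_sum,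
          Finset.sum_sub_distrib,
          Finset.sum_ite_eq' (t i) (p i).1 (fun z => z),
          Finset.sum_ite_eq' (t i) (p i).2 (fun z => z),
          if_pos hat, if_pos hbt]
    have h'x : ∑ i, ∑ z ∈ t i, f' i z • z = x := by
      rw [Finset.sum_congr rfl (fun i _ => hrow i), Finset.sum_add_distrib, hfx]
      have h4 : ∑ i, (t₀ * c i) • ((p i).1 - (p i).2)
          = t₀ • ∑ i, c i • ((p i).1 - (p i).2) := by
        rw [Finset.smul_sum]
        exact Finset.sum_congr rfl fun i _ => mul_smul _ _ _
      rw [h4, hrel, smul_zero, add_zero]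
    have hsub : ∀ i, (t i).filter (fun z => f' i z ≠ 0) ⊆ s i := by
      intro i z hz
      rw [Finset.mem_filter] at hz
      rw [hsi i, Finset.mem_filter]
      refine ⟨hz.1, fun hfz => hz.2 ?_⟩
      simp only [hf']
      by_cases hci : c i = 0
      · simp [hci, hfz]
      · have hiS := hcS i hci
        have hza : z ≠ (p i).1 := by rintro rfl; exact (hfa i hiS).ne' hfz
        have hzb : z ≠ (p i).2 := by rintro rfl; exact (hfb i hiS).ne' hfz
        rw [if_neg hza, if_neg hzb, hfz]
        ring
    have hi₀S : i₀ ∈ S := hDS i₀ hi₀D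
    have hzero : ∃ z ∈ s i₀, f' i₀ z = 0 := by
      by_cases hc0 : 0 < c i₀
      · refine ⟨(p i₀).2, hp2 i₀ hi₀S, ?_⟩
        simp only [hf']
        rw [if_neg (Ne.symm (hp3 i₀ hi₀S)), if_pos trivial]
        have heq : t₀ = f i₀ (p i₀).2 / c i₀ := by
          rw [ht₀def, hr]
          simp [if_pos hc0]
        rw [heq]
        field_simp
        ring
      · have hcneg : c i₀ < 0 := lt_of_le_of_ne (not_lt.mp hc0) (hDc i₀ hi₀D)
        refine ⟨(p i₀).1, hp1 i₀ hi₀S, ?_⟩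
        simp only [hf']
        rw [if_neg (hp3 i₀ hi₀S), if_pos trivial]
        have heq : t₀ = f i₀ (p i₀).1 / (- c i₀) := by
          rw [ht₀def, hr]
          simp [if_neg hc0]
        have hc' : c i₀ ≠ 0 := ne_of_lt hcneg
        rw [heq]
        field_simp [hc']
        ring
    obtain ⟨z₀, hz₀s, hz₀⟩ := hzero
    have hlt : ((t i₀).filter (fun z => f' i₀ z ≠ 0)).card < (s i₀).card := by
      apply Finset.card_lt_card
      rw [Finset.ssubset_iff_of_subset (hsub i₀)]
      exact ⟨z₀, hz₀s, by simp [Finset.mem_filter, hz₀]⟩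
    have hle : ∀ i, ((t i).filter (fun z => f' i z ≠ 0)).card ≤ (s i).card :=
      fun i => Finset.card_le_card (hsub i)
    have hN' : ∑ i, ((t i).filter (fun z => f' i z ≠ 0)).card < N := by
      rw [← hN]
      exact Finset.sum_lt_sum (fun i _ => hle i) ⟨i₀, Finset.mem_univ _, hlt⟩
    exact IH _ hN' f' h'0 h'1 h'x rfl

theorem stmt4 {d n : ℕ} (A : Fin n → Set (EuclideanSpace ℝ (Fin d)))
    (hA : ∀ i, (A i).Nonempty)
    (x : EuclideanSpace ℝ (Fin d))
    (hx : x ∈ ∑ i, convexHull ℝ (A i)) :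
    ∃ y : Fin n → EuclideanSpace ℝ (Fin d),
      (∀ i, y i ∈ convexHull ℝ (A i)) ∧
      x = ∑ i, y i ∧
      Set.ncard {i | y i ∉ A i} ≤ d := by
  rw [Set.mem_fintype_sum] at hx
  obtain ⟨z, hz, hzx⟩ := hx
  have h1 : ∀ i, ∃ T : Finset (EuclideanSpace ℝ (Fin d)),
      ↑T ⊆ A i ∧ z i ∈ convexHull ℝ (T : Set (EuclideanSpace ℝ (Fin d))) := by
    intro i
    have := hz i
    rw [convexHull_eq_union_convexHull_finite_subsets] at this
    simpa using this
  choose T hT hzT using h1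
  have h2 : ∀ i, ∃ w : EuclideanSpace ℝ (Fin d) → ℝ,
      (∀ y ∈ T i, 0 ≤ w y) ∧ ∑ y ∈ T i, w y = 1 ∧ (T i).centerMass w id = z i := by
    intro i
    have := hzT i
    rwa [Finset.convexHull_eq] at this
  choose w hw0 hw1 hwz using h2
  have hX : ∑ i, ∑ a ∈ T i, w i a • a = x := by
    rw [← hzx]
    refine Finset.sum_congr rfl fun i _ => ?_
    rw [← hwz i, Finset.centerMass_eq_of_sum_1 _ _ (hw1 i)]
    simp
  exact sf_key A T hT x _ w hw0 hw1 hX rfl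
end

section
/- Let D ⊆ ℝ^k be nonempty compact convex, q : D → ℝ continuous, and q_* its convex minorant. Then Argmin(q) ⊆ Argmin(q_*), and Argmin(q_*) equals the closed convex hull of Argmin(q). -/
open Set Finset

/-- The convex hull of a compact set in a finite-dimensional Euclidean space is compact. -/
lemma aux_isCompact_convexHull_stmt8 {k : ℕ} {s : Set (EuclideanSpace ℝ (Fin k))}
    (hs : IsCompact s) : IsCompact (convexHull ℝ s) := by
  rcases s.eq_empty_or_nonempty with rfl | ⟨s₀, hs₀⟩
  · simp
  set n := k + 1 with hn
  set T : Set ((Fin n → ℝ) × (Fin n → EuclideanSpace ℝ (Fin k))) :=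
    stdSimplex ℝ (Fin n) ×ˢ Set.univ.pi (fun _ => s) with hT
  have hTcpt : IsCompact T := (isCompact_stdSimplex ℝ _).prod (isCompact_univ_pi fun _ => hs)
  set F : (Fin n → ℝ) × (Fin n → EuclideanSpace ℝ (Fin k)) → EuclideanSpace ℝ (Fin k) :=
    fun wp => ∑ i, wp.1 i • wp.2 i with hF
  have hFcont : Continuous F := by
    apply continuous_finset_sum
    intro i _
    exact ((continuous_apply i).comp continuous_fst).smul
      ((continuous_apply i).comp continuous_snd)
  have him : convexHull ℝ s = F '' T := by
    apply Set.Subset.antisymm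
    · intro x hx
      obtain ⟨ι, hι, z, w, hrange, hai, hwpos, hwsum, hxeq⟩ :=
        eq_pos_convex_span_of_mem_convexHull hx
      letI := hι
      have hcard : Fintype.card ι ≤ n := by
        have h1 := hai.card_le_finrank_succ
        have h2 : Module.finrank ℝ (vectorSpan ℝ (Set.range z)) ≤ k := by
          have := Submodule.finrank_le (vectorSpan ℝ (Set.range z))
          simpa [finrank_euclideanSpace_fin] using this
        omega
      obtain ⟨e⟩ : Nonempty (ι ↪ Fin n) := by
        rw [Function.Embedding.nonempty_iff_card_le]
        simpa using hcard
      set w' : Fin n → ℝ := Function.extend e w (fun _ => 0) with hw'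
      set p' : Fin n → EuclideanSpace ℝ (Fin k) := Function.extend e z (fun _ => s₀) with hp'
      have hw'e : ∀ i, w' (e i) = w i := fun i => e.injective.extend_apply w _ i
      have hp'e : ∀ i, p' (e i) = z i := fun i => e.injective.extend_apply z _ i
      have hw'0 : ∀ j, (¬ ∃ i, e i = j) → w' j = 0 := fun j hj =>
        Function.extend_apply' w _ j hj
      have hp'0 : ∀ j, (¬ ∃ i, e i = j) → p' j = s₀ := fun j hj =>
        Function.extend_apply' z _ j hj
      have hw'sum : ∑ j, w' j = 1 := by
        calc ∑ j, w' j = ∑ j ∈ Finset.univ.map e, w' j := by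
              symm
              apply Finset.sum_subset (Finset.subset_univ _)
              intro j _ hj
              apply hw'0 j
              rintro ⟨i, rfl⟩
              exact hj (Finset.mem_map.2 ⟨i, Finset.mem_univ i, rfl⟩)
          _ = ∑ i, w' (e i) := Finset.sum_map _ e w'
          _ = ∑ i, w i := by simp [hw'e]
          _ = 1 := hwsum
      have hw'nonneg : ∀ j, 0 ≤ w' j := by
        intro j
        by_cases hj : ∃ i, e i = j
        · obtain ⟨i, rfl⟩ := hj
          rw [hw'e]
          exact (hwpos i).le
        · rw [hw'0 j hj]
      have hp's : ∀ j, p' j ∈ s := by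
        intro j
        by_cases hj : ∃ i, e i = j
        · obtain ⟨i, rfl⟩ := hj
          rw [hp'e]
          exact hrange ⟨i, rfl⟩
        · rw [hp'0 j hj]
          exact hs₀
      refine ⟨(w', p'), ⟨⟨hw'nonneg, hw'sum⟩, fun j _ => hp's j⟩, ?_⟩
      show ∑ j, w' j • p' j = x
      calc ∑ j, w' j • p' j = ∑ j ∈ Finset.univ.map e, w' j • p' j := by
            symm
            apply Finset.sum_subset (Finset.subset_univ _)
            intro j _ hj
            have hne : ¬ ∃ i, e i = j := by
              rintro ⟨i, rfl⟩
              exact hj (Finset.mem_map.2 ⟨i, Finset.mem_univ i, rfl⟩)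
            rw [hw'0 j hne, zero_smul]
        _ = ∑ i, w' (e i) • p' (e i) := Finset.sum_map _ e (fun j => w' j • p' j)
        _ = ∑ i, w i • z i := by simp [hw'e, hp'e]
        _ = x := hxeq
    · rintro _ ⟨⟨w, p⟩, ⟨hw, hp⟩, rfl⟩
      exact (convex_convexHull ℝ s).sum_mem (fun i _ => hw.1 i) hw.2
        (fun i _ => subset_convexHull ℝ s (hp i (Set.mem_univ i)))
  rw [him]
  exact hTcpt.image hFcont

theorem stmt8 {k : ℕ} (D : Set (EuclideanSpace ℝ (Fin k)))
    (hD : IsCompact D) (hDne : D.Nonempty) (hDconv : Convex ℝ D)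
    (q : EuclideanSpace ℝ (Fin k) → ℝ) (hq : ContinuousOn q D)
    (qstar : EuclideanSpace ℝ (Fin k) → ℝ)
    (hqstar : ∀ x, qstar x = sSup {z : ℝ | ∃ h : EuclideanSpace ℝ (Fin k) → ℝ,
      ConvexOn ℝ D h ∧ (∀ y ∈ D, h y ≤ q y) ∧ z = h x}) :
    {x | x ∈ D ∧ ∀ y ∈ D, q x ≤ q y} ⊆ {x | x ∈ D ∧ ∀ y ∈ D, qstar x ≤ qstar y} ∧
    {x | x ∈ D ∧ ∀ y ∈ D, qstar x ≤ qstar y}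
      = closure (convexHull ℝ {x | x ∈ D ∧ ∀ y ∈ D, q x ≤ q y}) := by
  obtain ⟨x₀, hx₀D, hx₀'⟩ := hD.exists_isMinOn hDne hq
  have hx₀ : ∀ y ∈ D, q x₀ ≤ q y := fun y hy => isMinOn_iff.mp hx₀' y hy
  set m := q x₀ with hm
  set Aq := {x | x ∈ D ∧ ∀ y ∈ D, q x ≤ q y} with hAqdef
  have hAq_sub_D : Aq ⊆ D := fun x hx => hx.1
  have hmem_m : ∀ x, m ∈ {z : ℝ | ∃ h : EuclideanSpace ℝ (Fin k) → ℝ,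
      ConvexOn ℝ D h ∧ (∀ y ∈ D, h y ≤ q y) ∧ z = h x} :=
    fun x => ⟨fun _ => m, convexOn_const m hDconv, fun y hy => hx₀ y hy, rfl⟩
  have hbdd : ∀ x ∈ D, BddAbove {z : ℝ | ∃ h : EuclideanSpace ℝ (Fin k) → ℝ,
      ConvexOn ℝ D h ∧ (∀ y ∈ D, h y ≤ q y) ∧ z = h x} := by
    intro x hx
    refine ⟨q x, ?_⟩
    rintro z ⟨h, _, hle, rfl⟩
    exact hle x hx
  have hqs_ge : ∀ x ∈ D, m ≤ qstar x := by
    intro x hx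
    rw [hqstar]
    exact le_csSup (hbdd x hx) (hmem_m x)
  have hqs_le : ∀ x ∈ D, qstar x ≤ q x := by
    intro x hx
    rw [hqstar]
    refine csSup_le ⟨m, hmem_m x⟩ ?_
    rintro z ⟨h, _, hle, rfl⟩
    exact hle x hx
  have hAq_eq : Aq = D ∩ q ⁻¹' Set.Iic m := by
    ext x
    constructor
    · rintro ⟨hxD, hmin⟩
      exact ⟨hxD, hmin x₀ hx₀D⟩
    · rintro ⟨hxD, hxm⟩
      exact ⟨hxD, fun y hy => le_trans hxm (hx₀ y hy)⟩
  have hAq_cpt : IsCompact Aq := by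
    refine hD.of_isClosed_subset ?_ hAq_sub_D
    rw [hAq_eq]
    exact hq.preimage_isClosed_of_isClosed hD.isClosed isClosed_Iic
  have hK_cpt : IsCompact (convexHull ℝ Aq) := aux_isCompact_convexHull_stmt8 hAq_cpt
  have hK_sub_D : convexHull ℝ Aq ⊆ D := convexHull_min hAq_sub_D hDconv
  -- On the convex hull of Argmin q, qstar ≤ m (Jensen / maximum principle)
  have hA : ∀ x ∈ convexHull ℝ Aq, qstar x ≤ m := by
    intro x hx
    rw [hqstar]
    refine csSup_le ⟨m, hmem_m x⟩ ?_
    rintro z ⟨h, hconv, hle, rfl⟩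
    obtain ⟨y, hyAq, hxy⟩ := hconv.exists_ge_of_mem_convexHull hAq_sub_D hx
    calc h x ≤ h y := hxy
      _ ≤ q y := hle y hyAq.1
      _ ≤ m := hyAq.2 x₀ hx₀D
  -- Separation: if x ∈ D and qstar x ≤ m then x ∈ convexHull ℝ Aq
  have hB : ∀ x ∈ D, qstar x ≤ m → x ∈ convexHull ℝ Aq := by
    intro x hxD hxm
    by_contra hxK
    obtain ⟨f, u, hfu, hux⟩ := geometric_hahn_banach_closed_point
      (convex_convexHull ℝ Aq) hK_cpt.isClosed hxK
    set A := D ∩ f ⁻¹' Set.Ici u with hAdef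
    have hA_closed : IsClosed A := hD.isClosed.inter (isClosed_Ici.preimage f.continuous)
    have hA_cpt : IsCompact A := hD.of_isClosed_subset hA_closed (fun y hy => hy.1)
    have hxA : x ∈ A := ⟨hxD, le_of_lt hux⟩
    have hApos : ∀ y ∈ A, m < q y := by
      intro y hy
      rcases lt_or_ge m (q y) with h | h
      · exact h
      · exfalso
        have hyAq : y ∈ Aq := ⟨hy.1, fun z hz => le_trans h (hx₀ z hz)⟩
        exact absurd hy.2 (not_le.2 (hfu y (subset_convexHull ℝ Aq hyAq)))
    obtain ⟨yδ, hyδA, hδmin⟩ := hA_cpt.exists_isMinOn ⟨x, hxA⟩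
      (hq.mono (fun y hy => hy.1))
    set δ := q yδ - m with hδdef
    have hδpos : 0 < δ := sub_pos.2 (hApos yδ hyδA)
    obtain ⟨yM, hyMA, hMmax⟩ := hA_cpt.exists_isMaxOn ⟨x, hxA⟩
      (f.continuous.continuousOn)
    set M := f yM - u with hMdef
    have hMpos : 0 < M := by
      have h1 : f x ≤ f yM := isMaxOn_iff.mp hMmax x hxA
      have : u < f x := hux
      simp only [hMdef]
      linarith
    set t := δ / M with htdef
    have htpos : 0 < t := div_pos hδpos hMpos
    set g : EuclideanSpace ℝ (Fin k) → ℝ := fun y => m + t * (f y - u) with hgdef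
    have hgconv : ConvexOn ℝ D g := by
      refine ⟨hDconv, fun y hy z hz a b ha hb hab => le_of_eq ?_⟩
      simp only [hgdef, map_add, map_smul, smul_eq_mul]
      linear_combination (t * u - m) * hab
    have hgle : ∀ y ∈ D, g y ≤ q y := by
      intro y hyD
      rcases le_or_gt u (f y) with hfy | hfy
      · have hyA : y ∈ A := ⟨hyD, hfy⟩
        have h1 : f y ≤ f yM := isMaxOn_iff.mp hMmax y hyA
        have h2 : t * (f y - u) ≤ t * M := by
          apply mul_le_mul_of_nonneg_left _ htpos.le
          simp only [hMdef]; linarith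
        have h3 : t * M = δ := div_mul_cancel₀ δ hMpos.ne'
        have h4 : q yδ ≤ q y := isMinOn_iff.mp hδmin y hyA
        simp only [hgdef]
        linarith
      · have h1 : t * (f y - u) < 0 := mul_neg_of_pos_of_neg htpos (by linarith)
        have h2 : m ≤ q y := hx₀ y hyD
        simp only [hgdef]
        linarith
    have h5 : g x ≤ qstar x := by
      rw [hqstar]
      exact le_csSup (hbdd x hxD) ⟨g, hgconv, hgle, rfl⟩
    have h6 : m < g x := by
      simp only [hgdef]
      nlinarith [mul_pos htpos (sub_pos.2 hux)]
    linarith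
  have hqs_x₀ : qstar x₀ = m := le_antisymm (hqs_le x₀ hx₀D) (hqs_ge x₀ hx₀D)
  constructor
  · rintro x ⟨hxD, hxmin⟩
    refine ⟨hxD, fun y hy => ?_⟩
    have hqx : q x = m := le_antisymm (hxmin x₀ hx₀D) (hx₀ x hxD)
    calc qstar x ≤ q x := hqs_le x hxD
      _ = m := hqx
      _ ≤ qstar y := hqs_ge y hy
  · rw [hK_cpt.isClosed.closure_eq]
    ext x
    constructor
    · rintro ⟨hxD, hxmin⟩
      exact hB x hxD ((hxmin x₀ hx₀D).trans hqs_x₀.le)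
    · intro hx
      have hxD := hK_sub_D hx
      exact ⟨hxD, fun y hy => (hA x hx).trans (hqs_ge y hy)⟩
end

section
/- Let A ⊆ ℝ^d be compact with Cesàro-limit set L = {x : x = lim_{n→∞} (1/n)Σ_{i=1}^n x_i for some sequence (x_i) with x_i ∈ A for all i}. Then L = conv̄(A), the closed convex hull of A. In particular, (x,y) ∈ ẽpi(q_*) if and only if (x,y) is a limit of Cesàro averages (1/n)Σ_{i=1}^n (x_i, y_i) with (x_i, y_i) ∈ ẽpi(q). -/
open Filter Finset

local notation "⟪" x ", " y "⟫" => @inner ℝ _ _ x y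

theorem stmt10 {d : ℕ} (A : Set (EuclideanSpace ℝ (Fin d))) (hA : IsCompact A) :
    {x : EuclideanSpace ℝ (Fin d) | ∃ y : ℕ → EuclideanSpace ℝ (Fin d),
        (∀ i, y i ∈ A) ∧
        Filter.Tendsto (fun n : ℕ => (n : ℝ)⁻¹ • ∑ i ∈ Finset.range n, y i)
          Filter.atTop (nhds x)}
      = closure (convexHull ℝ A) := by
  ext x
  simp only [Set.mem_setOf_eq]
  constructor
  · rintro ⟨y, hy, hlim⟩
    refine mem_closure_of_tendsto hlim ?_
    filter_upwards [eventually_ge_atTop 1] with n hn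
    have hn' : (0:ℝ) < n := by exact_mod_cast hn
    rw [Finset.smul_sum]
    exact (convex_convexHull ℝ A).sum_mem (fun i _ => le_of_lt (by positivity))
      (by rw [Finset.sum_const, card_range, nsmul_eq_mul, mul_inv_cancel₀ hn'.ne'])
      (fun i _ => subset_convexHull ℝ A (hy i))
  · intro hx
    have hAne : A.Nonempty := by
      by_contra h
      rw [Set.not_nonempty_iff_eq_empty] at h
      simp [h] at hx
    -- minimizer choice function
    have hg : ∀ e : EuclideanSpace ℝ (Fin d), ∃ a, a ∈ A ∧ ∀ b ∈ A, ⟪e, a⟫ ≤ ⟪e, b⟫ := by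
      intro e
      obtain ⟨a, ha, hmin⟩ := hA.exists_isMinOn hAne
        ((continuous_const.inner continuous_id).continuousOn
          (f := fun z : EuclideanSpace ℝ (Fin d) => ⟪e, z⟫))
      exact ⟨a, ha, fun b hb => hmin hb⟩
    choose g hgA hgmin using hg
    have hkey : ∀ e, ⟪e, g e - x⟫ ≤ 0 := by
      intro e
      have hconv : Convex ℝ {z : EuclideanSpace ℝ (Fin d) | ⟪e, g e⟫ ≤ ⟪e, z⟫} :=
        convex_halfSpace_ge ⟨fun a b => inner_add_right e a b,
          fun c a => real_inner_smul_right e a c⟩ _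
      have hsub : closure (convexHull ℝ A) ⊆ {z | ⟪e, g e⟫ ≤ ⟪e, z⟫} :=
        closure_minimal (convexHull_min (fun a ha => hgmin e a ha) hconv)
          (isClosed_le continuous_const (continuous_const.inner continuous_id))
      have hxz := hsub hx
      have : ⟪e, g e⟫ - ⟪e, x⟫ ≤ 0 := sub_nonpos.mpr hxz
      simpa [inner_sub_right] using this
    obtain ⟨R, hR⟩ : ∃ R, ∀ a ∈ A, ‖a - x‖ ≤ R := by
      obtain ⟨R, hR⟩ := hA.isBounded.subset_closedBall x
      exact ⟨R, fun a ha => by simpa [dist_eq_norm] using hR ha⟩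
    have hR0 : 0 ≤ R := le_trans (norm_nonneg _) (hR _ hAne.choose_spec)
    -- recursive construction
    set S : ℕ → EuclideanSpace ℝ (Fin d) :=
      fun n => Nat.rec 0 (fun n Sn => Sn + g (Sn - (n:ℝ) • x)) n with hSdef
    set y : ℕ → EuclideanSpace ℝ (Fin d) := fun n => g (S n - (n:ℝ) • x) with hydef
    have hSsucc : ∀ n, S (n+1) = S n + y n := fun n => rfl
    have hmem : ∀ n, y n ∈ A := fun n => hgA _
    have hsum : ∀ n, ∑ i ∈ Finset.range n, y i = S n := by
      intro n
      induction n with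
      | zero => simp [hSdef]
      | succ n ih => rw [Finset.sum_range_succ, ih, hSsucc]
    have hbound : ∀ n, ‖S n - (n:ℝ) • x‖ ^ 2 ≤ n * R ^ 2 := by
      intro n
      induction n with
      | zero => simp [hSdef]
      | succ n ih =>
        have hsplit : S (n+1) - ((n+1 : ℕ) : ℝ) • x
            = (S n - (n:ℝ) • x) + (y n - x) := by
          rw [hSsucc]
          push_cast
          module
        have hinner : ⟪S n - (n:ℝ) • x, y n - x⟫ ≤ 0 := hkey _
        have hnorm : ‖y n - x‖ ≤ R := hR _ (hmem n)
        have hnsq : ‖y n - x‖ ^ 2 ≤ R ^ 2 := by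
          have := pow_le_pow_left₀ (norm_nonneg _) hnorm 2
          simpa using this
        rw [hsplit, norm_add_sq_real]
        push_cast
        nlinarith [hinner, hnsq, ih]
    refine ⟨y, hmem, ?_⟩
    rw [← tendsto_sub_nhds_zero_iff]
    refine squeeze_zero_norm' (a := fun n : ℕ => R / Real.sqrt n) ?_ ?_
    · filter_upwards [eventually_ge_atTop 1] with n hn
      have hn' : (0:ℝ) < n := by exact_mod_cast hn
      have h1 : (n:ℝ)⁻¹ • ∑ i ∈ Finset.range n, y i - x
          = (n:ℝ)⁻¹ • (S n - (n:ℝ) • x) := by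
        rw [hsum n, smul_sub, smul_smul, inv_mul_cancel₀ hn'.ne', one_smul]
      rw [h1, norm_smul]
      have h2 : ‖S n - (n:ℝ) • x‖ ≤ Real.sqrt n * R := by
        have := Real.sqrt_le_sqrt (hbound n)
        rwa [Real.sqrt_sq (norm_nonneg _), show (n:ℝ) * R ^ 2 = (Real.sqrt n * R)^2 by
          rw [mul_pow, Real.sq_sqrt hn'.le], Real.sqrt_sq (by positivity)] at this
      have hsn : (0:ℝ) < Real.sqrt n := Real.sqrt_pos.mpr hn'
      calc ‖(n:ℝ)⁻¹‖ * ‖S n - (n:ℝ) • x‖ ≤ (n:ℝ)⁻¹ * (Real.sqrt n * R) := by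
            rw [Real.norm_eq_abs, abs_of_pos (by positivity)]
            exact mul_le_mul_of_nonneg_left h2 (by positivity)
        _ = R / Real.sqrt n := by
            field_simp
            nlinarith [Real.mul_self_sqrt hn'.le, hsn, hR0]
    · have hsqrt : Tendsto (fun n : ℕ => Real.sqrt n) atTop atTop := by
        have h12 : Tendsto (fun x : ℝ => x ^ (1/2 : ℝ)) atTop atTop :=
          tendsto_rpow_atTop (by norm_num)
        have := h12.comp (tendsto_natCast_atTop_atTop (R := ℝ))
        refine this.congr (fun n => ?_)
        simp only [Function.comp_apply]
        rw [Real.sqrt_eq_rpow]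
      exact Tendsto.div_atTop tendsto_const_nhds hsqrt
end

section
/- Let A ⊆ ℝ^d be compact and suppose x ∈ ℝ^d is such that for every ε > 0 and every n₀ there exist n ≥ n₀ and points y_1, …, y_n ∈ A with |(1/n)Σ y_i − x| < ε (i.e., x is a limit point of (1/n)A_n). Then there exists a single sequence (y_i) with y_i ∈ A for all i such that (1/n)Σ_{i=1}^n y_i → x as n → ∞. -/
variable {E : Type*} [NormedAddCommGroup E] [NormedSpace ℝ E]

lemma norm_list_sum_sub (x : E) (C : ℝ) :
    ∀ (l : List E), (∀ a ∈ l, ‖a - x‖ ≤ C) → ‖l.sum - (l.length : ℝ) • x‖ ≤ l.length * C := by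
  intro l
  induction l with
  | nil => simp
  | cons a l ih =>
    intro h
    have h1 : ‖a - x‖ ≤ C := h a (by simp)
    have h2 := ih (fun b hb => h b (by simp [hb]))
    have : (a :: l).sum - ((a :: l).length : ℝ) • x = (a - x) + (l.sum - (l.length : ℝ) • x) := by
      simp [List.sum_cons, List.length_cons]
      push_cast
      module
    rw [this]
    calc ‖(a - x) + (l.sum - (l.length : ℝ) • x)‖ ≤ ‖a - x‖ + ‖l.sum - (l.length : ℝ) • x‖ :=
          norm_add_le _ _
      _ ≤ C + l.length * C := add_le_add h1 h2
      _ = (a :: l).length * C := by simp [List.length_cons]; ring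

lemma flatten_replicate_length (u : List E) (r : ℕ) :
    ((List.replicate r u).flatten).length = r * u.length := by
  simp [List.length_flatten, List.map_replicate, List.sum_replicate, smul_eq_mul]

lemma flatten_replicate_sum (u : List E) (r : ℕ) :
    ((List.replicate r u).flatten).sum = r • u.sum := by
  simp [List.sum_flatten, List.map_replicate, List.sum_replicate]

lemma take_flatten_replicate (u : List E) :
    ∀ (q r s : ℕ), s ≤ u.length → q * u.length + s ≤ r * u.length →
      (((List.replicate r u).flatten).take (q * u.length + s)).sum
        = q • u.sum + (u.take s).sum := by
  intro q
  induction q with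
  | zero =>
    intro r s hs h
    cases r with
    | zero =>
      simp only [Nat.zero_mul, Nat.zero_add, Nat.le_zero] at h
      simp [h]
    | succ r =>
      rw [List.replicate_succ, List.flatten_cons, zero_mul, zero_add,
        List.take_append]
      have : s - u.length = 0 := Nat.sub_eq_zero_of_le hs
      rw [this]
      simp
  | succ q ih =>
    intro r s hs h
    rcases Nat.eq_zero_or_pos u.length with h0 | h0
    · simp [h0] at hs ⊢
      have : u = [] := List.length_eq_zero_iff.mp h0
      simp [this, hs]
    · have hr : q + 1 ≤ r := by
        by_contra hc
        push_neg at hc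
        have : r * u.length < (q+1) * u.length := by
          exact (Nat.mul_lt_mul_right h0).mpr (by omega)
        omega
      obtain ⟨r', rfl⟩ : ∃ r', r = r' + 1 := ⟨r - 1, by omega⟩
      rw [List.replicate_succ, List.flatten_cons, List.take_append]
      have e1 : (q + 1) * u.length + s - u.length = q * u.length + s := by
        have : (q+1) * u.length = q * u.length + u.length := by ring
        omega
      have e2 : List.take ((q + 1) * u.length + s) u = u := by
        apply List.take_of_length_le
        nlinarith
      rw [e1, e2, List.sum_append, ih r' s hs (by nlinarith)]
      rw [succ_nsmul']
      abel


lemma exists_seq_of_step {α : Type*} (Q : ℕ → α → Prop) (R : ℕ → α → α → Prop)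
    (a0 : α) (h0 : Q 0 a0)
    (hstep : ∀ k a, Q k a → ∃ b, Q (k+1) b ∧ R k a b) :
    ∃ f : ℕ → α, Q 0 (f 0) ∧ ∀ k, Q k (f k) ∧ R k (f k) (f (k+1)) := by
  choose g hg1 hg2 using hstep
  let f : ∀ n : ℕ, {a : α // Q n a} :=
    fun n => Nat.rec ⟨a0, h0⟩ (fun k p => ⟨g k p.1 p.2, hg1 k p.1 p.2⟩) n
  refine ⟨fun n => (f n).1, (f 0).2, fun k => ⟨(f k).2, ?_⟩⟩
  exact hg2 k (f k).1 (f k).2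

def Good (A : Set E) (x : E) (C : ℝ) (k : ℕ) (p : List E × List E) : Prop :=
  (∀ a ∈ p.1, a ∈ A) ∧ (∀ a ∈ p.2, a ∈ A) ∧ 1 ≤ p.2.length ∧ 1 ≤ p.1.length ∧
  ‖p.2.sum - (p.2.length : ℝ) • x‖ ≤ p.2.length / (k+2) ∧
  ‖p.1.sum - (p.1.length : ℝ) • x‖ ≤ 2 * p.1.length / (k+2) ∧
  (k+2) * (C+1) * p.2.length ≤ (p.1.length : ℝ)

set_option maxHeartbeats 2000000 in
lemma step_lemma (A : Set E) (x : E) (C : ℝ) (hC : 0 ≤ C)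
    (hCA : ∀ a ∈ A, ‖a - x‖ ≤ C)
    (HX : ∀ j : ℕ, ∃ u : List E, (∀ a ∈ u, a ∈ A) ∧ 1 ≤ u.length ∧
       ‖u.sum - (u.length : ℝ) • x‖ ≤ u.length / (j+2))
    (k : ℕ) (p : List E × List E) (hp : Good A x C k p) :
    ∃ p' : List E × List E, Good A x C (k+1) p' ∧
      (p.1 <+: p'.1 ∧ p.1.length < p'.1.length ∧
       ∀ m : ℕ, p.1.length ≤ m → m ≤ p'.1.length →
         ‖((p'.1.take m)).sum - (m : ℝ) • x‖ ≤ 4 * m / (k+2)) := by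
  obtain ⟨hL, hu, hun, hLn, hunit, hF, hcharge⟩ := hp
  obtain ⟨L, u⟩ := p
  simp only at hL hu hun hLn hunit hF hcharge ⊢
  obtain ⟨u', hu', hu'n, hu'unit⟩ := HX (k+1)
  obtain ⟨a, ha⟩ : ∃ a, L.length = a := ⟨_, rfl⟩
  obtain ⟨n, hn⟩ : ∃ n, u.length = n := ⟨_, rfl⟩
  obtain ⟨n', hn'⟩ : ∃ n', u'.length = n' := ⟨_, rfl⟩
  rw [ha] at hLn hF hcharge
  rw [hn] at hun hunit hcharge
  rw [hn'] at hu'n hu'unit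
  obtain ⟨r, hr⟩ : ∃ r : ℕ, r = 2 * a + (k+3) * (Nat.ceil (C+1)) * n' + 1 := ⟨_, rfl⟩
  set J : List E := (List.replicate r u).flatten with hJ
  have hJlen : J.length = r * n := by rw [hJ, flatten_replicate_length, hn]
  have hJsum : J.sum = r • u.sum := flatten_replicate_sum u r
  obtain ⟨L', hL'⟩ : ∃ L', L' = L ++ J := ⟨_, rfl⟩
  have hL'len : L'.length = a + r * n := by rw [hL', List.length_append, ha, hJlen]
  -- basic positivity
  have hk2 : (0:ℝ) < (k:ℝ) + 2 := by positivity
  have hk3 : (0:ℝ) < (k:ℝ) + 3 := by positivity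
  have hapos : (0:ℝ) < a := by exact_mod_cast hLn
  have hnpos : (0:ℝ) < n := by exact_mod_cast hun
  have hrn1 : r ≤ r * n := Nat.le_mul_of_pos_right r hun
  have hr1 : 1 ≤ r := by rw [hr]; exact Nat.le_add_left 1 _
  have h2ar : 2 * a ≤ r := by
    rw [hr]
    exact le_trans (Nat.le_add_right _ _) (Nat.le_succ _)
  have hXr : (k+3) * (Nat.ceil (C+1)) * n' ≤ r := by
    rw [hr]
    exact le_trans (Nat.le_add_left _ _) (Nat.le_succ _)
  have hrn2a : (2 * a : ℝ) ≤ (r : ℝ) * n := by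
    have : 2 * a ≤ r * n := le_trans h2ar hrn1
    exact_mod_cast this
  have hrnn' : ((k:ℝ)+3) * (C+1) * n' ≤ (r:ℝ) * n := by
    have h1 : (k+3) * (Nat.ceil (C+1)) * n' ≤ r * n := le_trans hXr hrn1
    have h2 : ((k:ℝ)+3) * (C+1) * n' ≤ ((k+3) * (Nat.ceil (C+1)) * n' : ℕ) := by
      push_cast
      exact mul_le_mul_of_nonneg_right
        (mul_le_mul_of_nonneg_left (Nat.le_ceil _) (by positivity)) (Nat.cast_nonneg _)
    calc ((k:ℝ)+3) * (C+1) * n' ≤ ((k+3) * (Nat.ceil (C+1)) * n' : ℕ) := h2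
      _ ≤ (r:ℝ) * n := by exact_mod_cast h1
  -- elements of L' in A
  have hL'A : ∀ b ∈ L', b ∈ A := by
    intro b hb
    rw [hL'] at hb
    rcases List.mem_append.mp hb with h | h
    · exact hL b h
    · obtain ⟨l, hl, hbl⟩ := List.mem_flatten.mp h
      rw [List.eq_of_mem_replicate hl] at hbl
      exact hu b hbl
  -- sum of L'
  have hL'sum : L'.sum = L.sum + r • u.sum := by rw [hL', List.sum_append, hJsum]
  -- end error bound
  have hFnew : ‖L'.sum - (L'.length : ℝ) • x‖ ≤ 2 * L'.length / ((k:ℝ)+1+2) := by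
    have key : L'.sum - (L'.length : ℝ) • x
        = (L.sum - (a:ℝ) • x) + (r : ℝ) • (u.sum - (n:ℝ) • x) := by
      rw [hL'sum, hL'len]
      push_cast
      module
    rw [key]
    have h2 : ‖(r : ℝ) • (u.sum - (n:ℝ) • x)‖ ≤ (r:ℝ) * ((n:ℝ) / ((k:ℝ)+2)) := by
      rw [norm_smul, Real.norm_natCast]
      exact mul_le_mul_of_nonneg_left hunit (Nat.cast_nonneg r)
    calc ‖(L.sum - (a:ℝ) • x) + (r : ℝ) • (u.sum - (n:ℝ) • x)‖
        ≤ ‖L.sum - (a:ℝ) • x‖ + ‖(r : ℝ) • (u.sum - (n:ℝ) • x)‖ := norm_add_le _ _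
      _ ≤ 2 * a / ((k:ℝ)+2) + (r:ℝ) * ((n:ℝ) / ((k:ℝ)+2)) := add_le_add hF h2
      _ = (2 * (a:ℝ) + (r:ℝ) * (n:ℝ)) / ((k:ℝ)+2) := by ring
      _ ≤ 2 * L'.length / ((k:ℝ)+1+2) := by
          rw [hL'len]
          push_cast
          have hrnk : (0:ℝ) ≤ (r:ℝ) * n * k := by positivity
          rw [div_le_div_iff₀ hk2 (by positivity : (0:ℝ) < (k:ℝ)+1+2)]
          nlinarith [hrn2a]
  -- new charge
  have hchargenew : ((k:ℝ)+1+2) * (C+1) * n' ≤ (L'.length : ℝ) := by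
    rw [hL'len]
    push_cast
    nlinarith [hrnn', hapos]
  refine ⟨(L', u'), ⟨hL'A, hu', ?_, ?_, ?_, ?_, ?_⟩, ?_, ?_, ?_⟩
  · rw [hn']; exact hu'n
  · rw [hL'len]
    exact le_trans hLn (Nat.le_add_right a _)
  · rw [hn']; exact_mod_cast hu'unit
  · exact_mod_cast hFnew
  · rw [hn']
    push_cast
    push_cast at hchargenew
    exact hchargenew
  · rw [hL']; exact ⟨J, rfl⟩
  · rw [ha, hL'len]
    have hrn0 : 0 < r * n := lt_of_lt_of_le hr1 hrn1
    exact Nat.lt_add_of_pos_right hrn0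
  -- mid-region bound
  intro m ham hm'
  rw [ha] at ham
  rw [hL'len] at hm'
  obtain ⟨t, ht⟩ : ∃ t, m - a = t := ⟨_, rfl⟩
  have htm : m = a + t := by omega
  have htrn : t ≤ r * n := by
    rw [← ht]
    exact Nat.sub_le_iff_le_add.mpr (by rw [Nat.add_comm] at hm'; exact hm')
  obtain ⟨q, hq⟩ : ∃ q, t / n = q := ⟨_, rfl⟩
  obtain ⟨s, hs⟩ : ∃ s, t % n = s := ⟨_, rfl⟩
  have hsn : s < n := by rw [← hs]; exact Nat.mod_lt _ hun
  have hqs : q * n + s = t := by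
    rw [← hq, ← hs, Nat.mul_comm]
    exact Nat.div_add_mod t n
  -- compute the take
  have htake : (L'.take m).sum = L.sum + (q • u.sum + (u.take s).sum) := by
    rw [hL', List.take_append,
      List.take_of_length_le (by rw [ha]; omega : L.length ≤ m), List.sum_append]
    congr 1
    have e : m - L.length = q * u.length + s := by rw [ha, hn, hqs]; omega
    rw [e]
    exact take_flatten_replicate u q r s (by rw [hn]; exact le_of_lt hsn)
      (by rw [hn, hqs]; exact htrn)
  -- split the error
  have hkey : (L'.take m).sum - (m:ℝ) • x
      = (L.sum - (a:ℝ) • x) + (q:ℝ) • (u.sum - (n:ℝ) • x)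
        + ((u.take s).sum - (s:ℝ) • x) := by
    rw [htake]
    have hmcast : (m:ℝ) = (a:ℝ) + (q:ℝ) * (n:ℝ) + (s:ℝ) := by
      have e2 : m = a + (q * n + s) := by rw [hqs]; omega
      rw [e2]; push_cast; ring
    rw [hmcast]
    push_cast
    module
  rw [hkey]
  -- bound the three pieces
  have hmpos : (0:ℝ) < m := by
    have : 1 ≤ m := le_trans hLn ham
    exact_mod_cast this
  have ham' : (a:ℝ) ≤ m := by exact_mod_cast ham
  have hqn : (q:ℝ) * n ≤ (m:ℝ) := by
    have : q * n ≤ m := by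
      calc q * n ≤ q * n + s := Nat.le_add_right _ _
        _ = t := hqs
        _ ≤ m := by omega
    exact_mod_cast this
  have hsC : ‖(u.take s).sum - (s:ℝ) • x‖ ≤ (m:ℝ) / ((k:ℝ)+2) := by
    have hlen : (u.take s).length = s := by
      rw [List.length_take, hn]; omega
    have h1 : ‖(u.take s).sum - ((u.take s).length : ℝ) • x‖ ≤ (u.take s).length * C :=
      norm_list_sum_sub x C _ (fun b hb => hCA b (hu b (List.mem_of_mem_take hb)))
    rw [hlen] at h1
    have h2 : (s:ℝ) * C ≤ (n:ℝ) * (C+1) := by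
      have hsn' : (s:ℝ) ≤ n := by exact_mod_cast le_of_lt hsn
      nlinarith
    have h3 : (n:ℝ) * (C+1) ≤ (a:ℝ) / ((k:ℝ)+2) := by
      rw [le_div_iff₀ hk2]
      nlinarith [hcharge]
    have h4 : (a:ℝ) / ((k:ℝ)+2) ≤ (m:ℝ) / ((k:ℝ)+2) := by gcongr
    linarith
  have e1 : ‖L.sum - (a:ℝ) • x‖ ≤ 2 * (m:ℝ) / ((k:ℝ)+2) := by
    refine le_trans hF ?_
    gcongr
  have e2 : ‖(q:ℝ) • (u.sum - (n:ℝ) • x)‖ ≤ (m:ℝ) / ((k:ℝ)+2) := by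
    rw [norm_smul, Real.norm_natCast]
    calc (q:ℝ) * ‖u.sum - (n:ℝ) • x‖ ≤ (q:ℝ) * ((n:ℝ) / ((k:ℝ)+2)) :=
          mul_le_mul_of_nonneg_left hunit (Nat.cast_nonneg q)
      _ = (q:ℝ) * (n:ℝ) / ((k:ℝ)+2) := by ring
      _ ≤ (m:ℝ) / ((k:ℝ)+2) := by gcongr
  calc ‖(L.sum - (a:ℝ) • x) + (q:ℝ) • (u.sum - (n:ℝ) • x) + ((u.take s).sum - (s:ℝ) • x)‖
      ≤ ‖L.sum - (a:ℝ) • x‖ + ‖(q:ℝ) • (u.sum - (n:ℝ) • x)‖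
        + ‖(u.take s).sum - (s:ℝ) • x‖ := norm_add₃_le
    _ ≤ 2 * (m:ℝ) / ((k:ℝ)+2) + (m:ℝ) / ((k:ℝ)+2) + (m:ℝ) / ((k:ℝ)+2) :=
        add_le_add (add_le_add e1 e2) hsC
    _ = 4 * (m:ℝ) / ((k:ℝ)+2) := by ring


theorem stmt11 {d : ℕ} (A : Set (EuclideanSpace ℝ (Fin d))) (hA : IsCompact A)
    (x : EuclideanSpace ℝ (Fin d))
    (hx : ∀ ε > (0 : ℝ), ∀ n₀ : ℕ, ∃ n ≥ n₀, 1 ≤ n ∧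
      ∃ y : Fin n → EuclideanSpace ℝ (Fin d), (∀ i, y i ∈ A) ∧
        ‖(n : ℝ)⁻¹ • ∑ i, y i - x‖ < ε) :
    ∃ y : ℕ → EuclideanSpace ℝ (Fin d), (∀ i, y i ∈ A) ∧
      Filter.Tendsto (fun n : ℕ => (n : ℝ)⁻¹ • ∑ i ∈ Finset.range n, y i)
        Filter.atTop (nhds x) := by
  classical
  obtain ⟨C₀, hC₀⟩ := hA.isBounded.exists_norm_le
  obtain ⟨C, hCdef⟩ : ∃ C : ℝ, C = max C₀ 0 + ‖x‖ := ⟨_, rfl⟩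
  have hC : 0 ≤ C := by
    rw [hCdef]
    have := le_max_right C₀ (0:ℝ)
    have := norm_nonneg x
    linarith
  have hCA : ∀ a ∈ A, ‖a - x‖ ≤ C := by
    intro a ha
    rw [hCdef]
    calc ‖a - x‖ ≤ ‖a‖ + ‖x‖ := norm_sub_le a x
      _ ≤ max C₀ 0 + ‖x‖ := by
          have h1 := hC₀ a ha
          have h2 := le_max_left C₀ (0:ℝ)
          linarith
  have HX : ∀ j : ℕ, ∃ u : List (EuclideanSpace ℝ (Fin d)), (∀ a ∈ u, a ∈ A) ∧
      1 ≤ u.length ∧ ‖u.sum - (u.length : ℝ) • x‖ ≤ u.length / (j+2) := by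
    intro j
    have hε : (0:ℝ) < 1/((j:ℝ)+2) := by positivity
    obtain ⟨n, -, hn1, y, hyA, hy⟩ := hx _ hε 1
    have hn0 : ((n:ℝ)) ≠ 0 := by
      have : (0:ℝ) < n := by exact_mod_cast hn1
      linarith
    refine ⟨List.ofFn y, ?_, ?_, ?_⟩
    · intro a ha
      obtain ⟨i, rfl⟩ := List.mem_ofFn.mp ha
      exact hyA i
    · rw [List.length_ofFn]; exact hn1
    · rw [List.length_ofFn, List.sum_ofFn]
      have key : (∑ i, y i) - (n:ℝ) • x = (n:ℝ) • ((n:ℝ)⁻¹ • ∑ i, y i - x) := by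
        rw [smul_sub, smul_inv_smul₀ hn0]
      rw [key, norm_smul, Real.norm_natCast]
      calc (n:ℝ) * ‖(n:ℝ)⁻¹ • ∑ i, y i - x‖ ≤ (n:ℝ) * (1/((j:ℝ)+2)) :=
            mul_le_mul_of_nonneg_left (le_of_lt hy) (Nat.cast_nonneg n)
        _ = (n:ℝ)/((j:ℝ)+2) := by ring
  -- base state
  obtain ⟨u0, hu0A, hu0n, hu0e⟩ := HX 0
  obtain ⟨r0, hr0⟩ : ∃ r0 : ℕ, r0 = 2 * Nat.ceil (C+1) := ⟨_, rfl⟩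
  have hceil : (1:ℕ) ≤ Nat.ceil (C+1) := by
    rw [Nat.one_le_iff_ne_zero]
    intro h
    have := Nat.le_ceil (C+1)
    rw [h] at this
    push_cast at this
    linarith
  have hr0pos : 1 ≤ r0 := by omega
  obtain ⟨L0, hL0⟩ : ∃ L0, L0 = (List.replicate r0 u0).flatten := ⟨_, rfl⟩
  have hL0len : L0.length = r0 * u0.length := by rw [hL0]; exact flatten_replicate_length u0 r0
  have hbase : Good A x C 0 (L0, u0) := by
    have hlenpos : 1 ≤ L0.length := by
      rw [hL0len]
      exact Nat.one_le_iff_ne_zero.mpr (Nat.mul_ne_zero (by omega) (by omega))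
    refine ⟨?_, hu0A, hu0n, hlenpos, hu0e, ?_, ?_⟩
    · intro b hb
      rw [hL0] at hb
      obtain ⟨l, hl, hbl⟩ := List.mem_flatten.mp hb
      rw [List.eq_of_mem_replicate hl] at hbl
      exact hu0A b hbl
    · -- error bound for L0
      have hsum : L0.sum = r0 • u0.sum := by rw [hL0]; exact flatten_replicate_sum u0 r0
      have key : L0.sum - (L0.length : ℝ) • x = (r0:ℝ) • (u0.sum - (u0.length:ℝ) • x) := by
        rw [hsum, hL0len]
        push_cast
        module
      rw [key, norm_smul, Real.norm_natCast]
      have h1 : (r0:ℝ) * ‖u0.sum - (u0.length:ℝ) • x‖ ≤ (r0:ℝ) * ((u0.length:ℝ)/(((0:ℕ):ℝ)+2)) :=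
        mul_le_mul_of_nonneg_left hu0e (Nat.cast_nonneg r0)
      refine le_trans h1 ?_
      rw [hL0len]
      push_cast
      have h0 : (0:ℝ) ≤ (r0:ℝ) * (u0.length:ℝ) := by positivity
      nlinarith [h0]
    · -- charge for L0
      rw [hL0len]
      push_cast
      have h1 : C + 1 ≤ (Nat.ceil (C+1) : ℝ) := Nat.le_ceil _
      have h2 : (r0:ℝ) = 2 * (Nat.ceil (C+1) : ℝ) := by rw [hr0]; push_cast; ring
      have h3 : (0:ℝ) ≤ (u0.length:ℝ) := Nat.cast_nonneg _
      nlinarith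
  obtain ⟨f, -, hf⟩ := exists_seq_of_step (Good A x C)
    (fun k p p' => p.1 <+: p'.1 ∧ p.1.length < p'.1.length ∧
      ∀ m : ℕ, p.1.length ≤ m → m ≤ p'.1.length →
        ‖((p'.1.take m)).sum - (m : ℝ) • x‖ ≤ 4 * m / (k+2))
    (L0, u0) hbase (step_lemma A x C hC hCA HX)
  obtain ⟨Lf, hLf⟩ : ∃ Lf : ℕ → List (EuclideanSpace ℝ (Fin d)), Lf = fun k => (f k).1 :=
    ⟨_, rfl⟩
  have hgood : ∀ k, Good A x C k (f k) := fun k => (hf k).1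
  have hmemA : ∀ k, ∀ b ∈ Lf k, b ∈ A := by
    intro k
    rw [hLf]
    exact (hgood k).1
  have hpos1 : ∀ k, 1 ≤ (Lf k).length := by
    intro k
    rw [hLf]
    exact (hgood k).2.2.2.1
  have hpref : ∀ k, Lf k <+: Lf (k+1) := by
    intro k; rw [hLf]; exact (hf k).2.1
  have hmono : ∀ k, (Lf k).length < (Lf (k+1)).length := by
    intro k; rw [hLf]; exact (hf k).2.2.1
  have hmid : ∀ k, ∀ m : ℕ, (Lf k).length ≤ m → m ≤ (Lf (k+1)).length →
      ‖(((Lf (k+1)).take m)).sum - (m : ℝ) • x‖ ≤ 4 * m / ((k:ℝ)+2) := by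
    intro k; rw [hLf]; exact (hf k).2.2.2
  have hlen1 : ∀ k, k + 1 ≤ (Lf k).length := by
    intro k
    induction k with
    | zero => exact hpos1 0
    | succ k ih => have := hmono k; omega
  have hpref' : ∀ j k, j ≤ k → Lf j <+: Lf k := by
    intro j k h
    induction k, h using Nat.le_induction with
    | base => exact List.prefix_refl _
    | succ k hk ih => exact ih.trans (hpref k)
  obtain ⟨y, hydef⟩ : ∃ y : ℕ → EuclideanSpace ℝ (Fin d),
      y = fun i => (Lf (i+1)).getD i 0 := ⟨_, rfl⟩
  have hi1 : ∀ i, i < (Lf (i+1)).length := fun i => lt_of_lt_of_le (by omega) (hlen1 (i+1))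
  have hyget : ∀ k i, (h : i < (Lf k).length) → y i = (Lf k)[i] := by
    intro k i h
    have e1 : y i = (Lf (i+1))[i]'(hi1 i) := by
      rw [hydef]; exact List.getD_eq_getElem _ _ (hi1 i)
    rw [e1]
    rcases le_total (i+1) k with hik | hik
    · exact (hpref' _ _ hik).getElem (hi1 i)
    · exact ((hpref' _ _ hik).getElem h).symm
  have hyA : ∀ i, y i ∈ A := by
    intro i
    have e1 : y i = (Lf (i+1))[i]'(hi1 i) := by
      rw [hydef]; exact List.getD_eq_getElem _ _ (hi1 i)
    rw [e1]
    exact hmemA _ _ (List.getElem_mem (hi1 i))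
  have hsum : ∀ k m, m ≤ (Lf k).length → ((Lf k).take m).sum = ∑ i ∈ Finset.range m, y i := by
    intro k m
    induction m with
    | zero => intro _; simp
    | succ m ih =>
      intro h
      have hm : m < (Lf k).length := by omega
      rw [List.sum_take_succ _ _ hm, Finset.sum_range_succ, ih (le_of_lt hm), hyget k m hm]
  refine ⟨y, hyA, ?_⟩
  rw [Metric.tendsto_atTop]
  intro ε hε
  obtain ⟨K, hK⟩ := exists_nat_gt (4/ε)
  refine ⟨(Lf K).length, ?_⟩
  intro n hn
  have hKn : K ≤ n := by have := hlen1 K; omega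
  have hnpos : 1 ≤ n := le_trans (hpos1 K) hn
  have hn0 : ((n:ℝ)) ≠ 0 := by
    have : (0:ℝ) < n := by exact_mod_cast hnpos
    linarith
  obtain ⟨k, hk⟩ : ∃ k, k = Nat.findGreatest (fun j => (Lf j).length ≤ n) n := ⟨_, rfl⟩
  have hPk : (Lf k).length ≤ n := by rw [hk]; exact Nat.findGreatest_spec (P := fun j => (Lf j).length ≤ n) hKn hn
  have hKk : K ≤ k := by rw [hk]; exact Nat.le_findGreatest hKn hn
  have hnk1 : n ≤ (Lf (k+1)).length := by
    by_cases h : k + 1 ≤ n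
    · have h2 := Nat.findGreatest_is_greatest (show Nat.findGreatest (fun j => (Lf j).length ≤ n) n < k+1 by omega) h
      simp only [not_le] at h2
      omega
    · have := hlen1 (k+1); omega
  have hb := hmid k n hPk hnk1
  rw [hsum (k+1) n hnk1] at hb
  rw [dist_eq_norm]
  have key : (n:ℝ)⁻¹ • ∑ i ∈ Finset.range n, y i - x
      = (n:ℝ)⁻¹ • ((∑ i ∈ Finset.range n, y i) - (n:ℝ) • x) := by
    rw [smul_sub, inv_smul_smul₀ hn0]
  rw [key, norm_smul, norm_inv, Real.norm_natCast]
  have hk2 : (0:ℝ) < (k:ℝ) + 2 := by positivity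
  have hK2 : (0:ℝ) < (K:ℝ) + 2 := by positivity
  calc (n:ℝ)⁻¹ * ‖(∑ i ∈ Finset.range n, y i) - (n:ℝ) • x‖
      ≤ (n:ℝ)⁻¹ * (4 * n / ((k:ℝ)+2)) :=
        mul_le_mul_of_nonneg_left hb (by positivity)
    _ = 4 / ((k:ℝ)+2) := by field_simp
    _ ≤ 4 / ((K:ℝ)+2) := by
        apply div_le_div_of_nonneg_left (by norm_num) hK2
        have : (K:ℝ) ≤ k := by exact_mod_cast hKk
        linarith
    _ < ε := by
        rw [div_lt_iff₀ hK2]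
        have h4 : 4 < ε * K := by
          have := (div_lt_iff₀ hε).mp hK
          linarith
        nlinarith
end

section
/- (Abel bounds by Cesàro limsup/liminf, two-sided) Let (c_i)_{i∈ℤ} be uniformly bounded. Then liminf_{N→∞} (1/(2N+1))Σ_{i=−N}^N c_i ≤ liminf_{α↑1} Σ_{i∈ℤ} C(α)α^{|i|} c_i ≤ limsup_{α↑1} Σ_{i∈ℤ} C(α)α^{|i|} c_i ≤ limsup_{N→∞} (1/(2N+1))Σ_{i=−N}^N c_i. -/
open Filter Set

namespace Stmt15

noncomputable def sig (c : ℤ → ℝ) (N : ℕ) : ℝ :=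
  (2 * (N : ℝ) + 1)⁻¹ * ∑ i ∈ Finset.Icc (-(N : ℤ)) N, c i

noncomputable def A (c : ℤ → ℝ) (α : ℝ) : ℝ :=
  ∑' i : ℤ, ((1 - α) / (1 + α)) * α ^ i.natAbs * c i

noncomputable def w (α : ℝ) (N : ℕ) : ℝ :=
  (1 - α) ^ 2 / (1 + α) * ((2 * (N : ℝ) + 1) * α ^ N)

lemma card_Icc (N : ℕ) : (Finset.Icc (-(N : ℤ)) N).card = 2 * N + 1 := by
  rw [Int.card_Icc]
  omega

lemma sig_abs {c : ℤ → ℝ} {M : ℝ} (hbdd : ∀ i, |c i| ≤ M) (N : ℕ) : |sig c N| ≤ M := by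
  have h1 : (0:ℝ) < 2 * (N:ℝ) + 1 := by positivity
  rw [sig, abs_mul, abs_inv, abs_of_pos h1, inv_mul_le_iff₀ h1]
  calc |∑ i ∈ Finset.Icc (-(N : ℤ)) N, c i| ≤ ∑ i ∈ Finset.Icc (-(N : ℤ)) N, |c i| :=
        Finset.abs_sum_le_sum_abs _ _
    _ ≤ ∑ _i ∈ Finset.Icc (-(N : ℤ)) N, M := Finset.sum_le_sum fun i _ => hbdd i
    _ = (2 * (N:ℝ) + 1) * M := by
        rw [Finset.sum_const, card_Icc]
        ring

lemma w_nonneg {α : ℝ} (hα : α ∈ Ioo (0:ℝ) 1) (N : ℕ) : 0 ≤ w α N := by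
  have h0 := hα.1
  apply mul_nonneg (div_nonneg (sq_nonneg _) (by linarith))
  positivity

lemma hasSum_w {α : ℝ} (hα : α ∈ Ioo (0:ℝ) 1) : HasSum (w α) 1 := by
  obtain ⟨h0, h1⟩ := hα
  have hnorm : ‖α‖ < 1 := by rw [Real.norm_eq_abs, abs_of_pos h0]; exact h1
  have hg : HasSum (fun n : ℕ => α ^ n) (1 - α)⁻¹ := hasSum_geometric_of_lt_one h0.le h1
  have hn : HasSum (fun n : ℕ => (n:ℝ) * α ^ n) (α / (1 - α) ^ 2) :=
    hasSum_coe_mul_geometric_of_norm_lt_one hnorm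
  have h2 : HasSum (fun n : ℕ => (2 * (n:ℝ) + 1) * α ^ n) ((1 + α) / (1 - α) ^ 2) := by
    have h3 := (hn.mul_left 2).add hg
    have he : ∀ n : ℕ, 2 * ((n:ℝ) * α ^ n) + α ^ n = (2 * (n:ℝ) + 1) * α ^ n := by
      intro n; ring
    have hv : 2 * (α / (1 - α) ^ 2) + (1 - α)⁻¹ = (1 + α) / (1 - α) ^ 2 := by
      have : (1:ℝ) - α ≠ 0 := by linarith
      field_simp
      ring
    rw [funext he, hv] at h3
    exact h3
  have h4 := h2.mul_left ((1 - α) ^ 2 / (1 + α))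
  have hv : (1 - α) ^ 2 / (1 + α) * ((1 + α) / (1 - α) ^ 2) = 1 := by
    have ha : (1:ℝ) - α ≠ 0 := by linarith
    have hb : (1:ℝ) + α ≠ 0 := by linarith
    field_simp
  rwa [hv] at h4

lemma summable_w_mul {α : ℝ} (hα : α ∈ Ioo (0:ℝ) 1) {u : ℕ → ℝ} {K : ℝ}
    (hu : ∀ N, |u N| ≤ K) : Summable (fun N => w α N * u N) := by
  have hws : Summable (fun N => w α N * K) := ((hasSum_w hα).summable).mul_right K
  refine Summable.of_abs (Summable.of_nonneg_of_le (fun N => abs_nonneg _) (fun N => ?_) hws)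
  rw [abs_mul, abs_of_nonneg (w_nonneg hα N)]
  exact mul_le_mul_of_nonneg_left (hu N) (w_nonneg hα N)


lemma mem_Icc_iff {N : ℕ} {i : ℤ} : i ∈ Finset.Icc (-(N : ℤ)) N ↔ i.natAbs ≤ N := by
  rw [Finset.mem_Icc]; omega

lemma A_eq {c : ℤ → ℝ} {M : ℝ} (hbdd : ∀ i, |c i| ≤ M) {α : ℝ} (hα : α ∈ Ioo (0:ℝ) 1) :
    A c α = ∑' N : ℕ, w α N * sig c N := by
  obtain ⟨hα0, hα1⟩ := hα
  have hα' : α ∈ Ioo (0:ℝ) 1 := ⟨hα0, hα1⟩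
  have hM : 0 ≤ M := (abs_nonneg _).trans (hbdd 0)
  set g : ℕ × ℤ → ℝ := fun p => if p.2.natAbs ≤ p.1 then α ^ p.1 * c p.2 else 0 with hg_def
  -- summability of |g|
  have hzero : ∀ (N : ℕ) (i : ℤ), i ∉ Finset.Icc (-(N : ℤ)) N → |g (N, i)| = 0 := by
    intro N i hi
    rw [mem_Icc_iff] at hi
    simp [hg_def, hi]
  have hrowsum : ∀ N : ℕ, Summable fun i : ℤ => |g (N, i)| := by
    intro N
    exact summable_of_ne_finset_zero (s := Finset.Icc (-(N : ℤ)) N) (hzero N)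
  have hrowbound : ∀ N : ℕ, ∑' i : ℤ, |g (N, i)| ≤ (2 * (N:ℝ) + 1) * α ^ N * M := by
    intro N
    rw [tsum_eq_sum (s := Finset.Icc (-(N : ℤ)) N) (hzero N)]
    calc ∑ i ∈ Finset.Icc (-(N : ℤ)) N, |g (N, i)|
        ≤ ∑ _i ∈ Finset.Icc (-(N : ℤ)) N, α ^ N * M := by
          apply Finset.sum_le_sum
          intro i hi
          rw [mem_Icc_iff] at hi
          simp only [hg_def, if_pos hi, abs_mul, abs_pow, abs_of_pos hα0]
          exact mul_le_mul_of_nonneg_left (hbdd i) (by positivity)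
      _ = (2 * (N:ℝ) + 1) * α ^ N * M := by
          rw [Finset.sum_const, card_Icc]
          ring
  have houter : Summable (fun N : ℕ => (2 * (N:ℝ) + 1) * α ^ N * M) := by
    have := ((hasSum_w hα').summable).mul_right (M * (1 + α) / (1 - α) ^ 2)
    refine this.congr fun N => ?_
    rw [w]
    have ha : (1:ℝ) - α ≠ 0 := by linarith
    have hb : (1:ℝ) + α ≠ 0 := by linarith
    field_simp
  have habsg : Summable (fun p : ℕ × ℤ => |g p|) := by
    rw [summable_prod_of_nonneg (fun p => abs_nonneg _)]
    exact ⟨hrowsum, Summable.of_nonneg_of_le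
      (fun N => tsum_nonneg fun i => abs_nonneg _) hrowbound houter⟩
  have hsumg : Summable g := habsg.of_abs
  -- row sums
  have hrow : ∀ N : ℕ, ∑' i : ℤ, g (N, i) = α ^ N * (∑ i ∈ Finset.Icc (-(N : ℤ)) N, c i) := by
    intro N
    rw [tsum_eq_sum (s := Finset.Icc (-(N : ℤ)) N) (fun i hi => by
      rw [mem_Icc_iff] at hi; simp [hg_def, hi]), Finset.mul_sum]
    refine Finset.sum_congr rfl fun i hi => ?_
    rw [mem_Icc_iff] at hi
    simp [hg_def, hi]
  -- column sums
  have hcol : ∀ i : ℤ, ∑' N : ℕ, g (N, i) = (1 - α)⁻¹ * (α ^ i.natAbs * c i) := by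
    intro i
    have hinj : Function.Injective (fun n : ℕ => n + i.natAbs) := add_left_injective _
    have hsupp : Function.support (fun N : ℕ => g (N, i)) ⊆
        Set.range (fun n : ℕ => n + i.natAbs) := by
      intro N hN
      rcases le_or_gt i.natAbs N with h | h
      · exact ⟨N - i.natAbs, Nat.sub_add_cancel h⟩
      · exfalso; apply hN; simp only [hg_def]; rw [if_neg (by omega)]
    rw [← hinj.tsum_eq hsupp]
    have he : ∀ n : ℕ, g (n + i.natAbs, i) = α ^ n * (α ^ i.natAbs * c i) := by
      intro n
      simp only [hg_def]
      rw [if_pos (Nat.le_add_left _ _), pow_add]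
      ring
    rw [tsum_congr he, tsum_mul_right, tsum_geometric_of_lt_one hα0.le hα1]
  -- Fubini
  have hfub : ∑' N : ℕ, (α ^ N * ∑ i ∈ Finset.Icc (-(N : ℤ)) N, c i)
      = (1 - α)⁻¹ * ∑' i : ℤ, α ^ i.natAbs * c i := by
    calc ∑' N : ℕ, (α ^ N * ∑ i ∈ Finset.Icc (-(N : ℤ)) N, c i)
        = ∑' (N : ℕ) (i : ℤ), g (N, i) := tsum_congr fun N => (hrow N).symm
      _ = ∑' (i : ℤ) (N : ℕ), g (N, i) := by
          have hsumg' : Summable (Function.uncurry fun N i => g (N, i)) := by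
            exact hsumg
          exact (Summable.tsum_comm (f := fun N i => g (N, i)) hsumg').symm
      _ = ∑' i : ℤ, (1 - α)⁻¹ * (α ^ i.natAbs * c i) := tsum_congr hcol
      _ = (1 - α)⁻¹ * ∑' i : ℤ, α ^ i.natAbs * c i := tsum_mul_left
  -- conclude
  have hAs : A c α = ((1 - α) / (1 + α)) * ∑' i : ℤ, α ^ i.natAbs * c i := by
    rw [A, ← tsum_mul_left]
    exact tsum_congr fun i => by ring
  have hT : ∑' i : ℤ, α ^ i.natAbs * c i
      = (1 - α) * ∑' N : ℕ, (α ^ N * ∑ i ∈ Finset.Icc (-(N : ℤ)) N, c i) := by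
    rw [hfub, ← mul_assoc, mul_inv_cancel₀ (by linarith : (1:ℝ) - α ≠ 0), one_mul]
  have hws : ∀ N : ℕ, w α N * sig c N
      = ((1 - α) / (1 + α) * (1 - α)) * (α ^ N * ∑ i ∈ Finset.Icc (-(N : ℤ)) N, c i) := by
    intro N
    have h2 : (2 * (N:ℝ) + 1) ≠ 0 := by positivity
    rw [w, sig]
    field_simp
  rw [hAs, hT, tsum_congr hws, tsum_mul_left, ← mul_assoc]

lemma absA {c : ℤ → ℝ} {M : ℝ} (hbdd : ∀ i, |c i| ≤ M) {α : ℝ} (hα : α ∈ Ioo (0:ℝ) 1) :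
    |A c α| ≤ M := by
  have hM : 0 ≤ M := (abs_nonneg _).trans (hbdd 0)
  have hs : ∀ N, |sig c N| ≤ M := sig_abs hbdd
  rw [A_eq hbdd hα]
  have h1 : Summable (fun N => |w α N * sig c N|) := (summable_w_mul hα hs).abs
  calc |∑' N : ℕ, w α N * sig c N| ≤ ∑' N : ℕ, |w α N * sig c N| := by
        simpa only [Real.norm_eq_abs] using norm_tsum_le_tsum_norm (f := fun N => w α N * sig c N)
          (by simpa only [Real.norm_eq_abs] using h1)
    _ ≤ ∑' N : ℕ, w α N * M := by
        refine Summable.tsum_le_tsum (fun N => ?_) h1 (((hasSum_w hα).summable).mul_right M)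
        rw [abs_mul, abs_of_nonneg (w_nonneg hα N)]
        exact mul_le_mul_of_nonneg_left (hs N) (w_nonneg hα N)
    _ = M := by rw [((hasSum_w hα).mul_right M).tsum_eq, one_mul]


lemma neBotF : (nhdsWithin (1:ℝ) (Ioo (0:ℝ) 1)).NeBot := by
  rw [← mem_closure_iff_nhdsWithin_neBot, closure_Ioo (by norm_num : (0:ℝ) ≠ 1)]
  exact ⟨by norm_num, le_refl 1⟩

lemma main {c : ℤ → ℝ} {M : ℝ} (hbdd : ∀ i, |c i| ≤ M) :
    limsup (A c) (nhdsWithin 1 (Ioo (0:ℝ) 1)) ≤ limsup (sig c) atTop := by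
  set F := nhdsWithin (1:ℝ) (Ioo (0:ℝ) 1) with hF_def
  haveI : F.NeBot := neBotF
  have hM : 0 ≤ M := (abs_nonneg _).trans (hbdd 0)
  have hsig : ∀ N, |sig c N| ≤ M := sig_abs hbdd
  set L := limsup (sig c) atTop with hL
  have hev_mem : ∀ᶠ α in F, α ∈ Ioo (0:ℝ) 1 := self_mem_nhdsWithin
  have hbelow : F.IsBoundedUnder (· ≥ ·) (A c) :=
    ⟨-M, eventually_map.mpr (hev_mem.mono fun α hα => (abs_le.mp (absA hbdd hα)).1)⟩
  have hcob : F.IsCoboundedUnder (· ≤ ·) (A c) := hbelow.isCoboundedUnder_le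
  refine le_of_forall_pos_le_add fun ε hε => ?_
  have hLbdd : IsBoundedUnder (· ≤ ·) atTop (sig c) :=
    ⟨M, eventually_map.mpr (Eventually.of_forall fun N => (abs_le.mp (hsig N)).2)⟩
  have h1 : ∀ᶠ N in atTop, sig c N < L + ε / 2 :=
    eventually_lt_of_limsup_lt (by linarith) hLbdd
  obtain ⟨N₀, hN₀⟩ := eventually_atTop.mp h1
  set K := M + |L + ε / 2| with hK
  have hK0 : 0 ≤ K := by positivity
  have key : ∀ α ∈ Ioo (0:ℝ) 1, A c α ≤ L + ε / 2 + K * ∑ N ∈ Finset.range N₀, w α N := by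
    intro α hα
    have hw := hasSum_w hα
    have hws : Summable (w α) := hw.summable
    have hwnn : ∀ N, 0 ≤ w α N := w_nonneg hα
    have hsum1 : Summable (fun N => w α N * sig c N) := summable_w_mul hα hsig
    have hsub : ∀ N, |sig c N - (L + ε / 2)| ≤ K := by
      intro N
      have h := hsig N
      rw [hK]
      have h2 := abs_sub (sig c N) (L + ε / 2)
      calc |sig c N - (L + ε / 2)| ≤ |sig c N| + |L + ε / 2| := h2
        _ ≤ M + |L + ε / 2| := by linarith
    have hsum2 : Summable (fun N => w α N * (sig c N - (L + ε / 2))) :=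
      summable_w_mul hα hsub
    rw [A_eq hbdd hα]
    have hsplit : ∑' N : ℕ, w α N * sig c N
        = (∑' N : ℕ, w α N * (sig c N - (L + ε / 2))) + (L + ε / 2) := by
      have hc : HasSum (fun N => w α N * (L + ε / 2)) (L + ε / 2) := by
        simpa using hw.mul_right (L + ε / 2)
      have := Summable.tsum_add hsum2 hc.summable
      rw [hc.tsum_eq] at this
      rw [← this]
      exact tsum_congr fun N => by ring
    rw [hsplit]
    have hRS : Summable (fun N : ℕ => if N < N₀ then w α N * K else 0) := by
      apply summable_of_ne_finset_zero (s := Finset.range N₀)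
      intro N hN
      rw [Finset.mem_range] at hN
      simp [hN]
    have hle : ∑' N : ℕ, w α N * (sig c N - (L + ε / 2))
        ≤ ∑' N : ℕ, (if N < N₀ then w α N * K else 0) := by
      refine Summable.tsum_le_tsum (fun N => ?_) hsum2 hRS
      by_cases h : N < N₀
      · rw [if_pos h]
        refine mul_le_mul_of_nonneg_left ?_ (hwnn N)
        exact (le_abs_self _).trans (hsub N)
      · rw [if_neg h]
        have h2 := hN₀ N (not_lt.mp h)
        exact mul_nonpos_iff.mpr (Or.inl ⟨hwnn N, by linarith⟩)
    have hRSval : ∑' N : ℕ, (if N < N₀ then w α N * K else 0)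
        = K * ∑ N ∈ Finset.range N₀, w α N := by
      rw [tsum_eq_sum (s := Finset.range N₀) (fun N hN => by
        rw [Finset.mem_range] at hN; simp [hN]), Finset.mul_sum]
      refine Finset.sum_congr rfl fun N hN => ?_
      rw [Finset.mem_range] at hN
      rw [if_pos hN]
      ring
    rw [hRSval] at hle
    linarith
  have hw1 : ∀ N : ℕ, w 1 N = 0 := by
    intro N; simp [w]
  have hcont : Tendsto (fun α : ℝ => K * ∑ N ∈ Finset.range N₀, w α N) F (nhds 0) := by
    have hten : Tendsto (fun α : ℝ => K * ∑ N ∈ Finset.range N₀, w α N) (nhds 1)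
        (nhds (K * ∑ N ∈ Finset.range N₀, w 1 N)) := by
      apply Tendsto.const_mul
      apply tendsto_finset_sum
      intro N _
      have hcw : ContinuousAt (fun α : ℝ => w α N) 1 := by
        apply ContinuousAt.mul
        · exact ContinuousAt.div (by fun_prop) (by fun_prop) (by norm_num)
        · fun_prop
      exact hcw
    have : K * ∑ N ∈ Finset.range N₀, w 1 N = 0 := by
      simp [hw1]
    rw [this] at hten
    exact hten.mono_left nhdsWithin_le_nhds
  have hev2 : ∀ᶠ α in F, K * ∑ N ∈ Finset.range N₀, w α N < ε / 2 :=
    hcont.eventually_lt_const (by linarith)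
  have hev3 : ∀ᶠ α in F, A c α ≤ L + ε := by
    filter_upwards [hev_mem, hev2] with α h1 h2
    have := key α h1
    linarith
  exact limsup_le_of_le hcob hev3

lemma limsup_neg' {γ : Type*} (f : Filter γ) (u : γ → ℝ) :
    limsup (fun x => -u x) f = -liminf u f := by
  have hset : -{a : ℝ | ∀ᶠ x in f, -u x ≤ a} = {a : ℝ | ∀ᶠ x in f, a ≤ u x} := by
    ext a
    simp only [Set.mem_neg, Set.mem_setOf_eq]
    constructor <;> intro h <;> exact h.mono fun x hx => by linarith
  rw [limsup_eq, liminf_eq, Real.sInf_def, hset]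


end Stmt15

open Stmt15 in
theorem stmt15 (c : ℤ → ℝ) (M : ℝ) (hbdd : ∀ i, |c i| ≤ M) :
    liminf (fun N : ℕ => (2 * (N : ℝ) + 1)⁻¹ * ∑ i ∈ Finset.Icc (-(N : ℤ)) N, c i) atTop
      ≤ liminf (fun α : ℝ => ∑' i : ℤ, ((1 - α) / (1 + α)) * α ^ i.natAbs * c i)
          (nhdsWithin 1 (Set.Ioo (0 : ℝ) 1)) ∧
    liminf (fun α : ℝ => ∑' i : ℤ, ((1 - α) / (1 + α)) * α ^ i.natAbs * c i)
        (nhdsWithin 1 (Set.Ioo (0 : ℝ) 1))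
      ≤ limsup (fun α : ℝ => ∑' i : ℤ, ((1 - α) / (1 + α)) * α ^ i.natAbs * c i)
          (nhdsWithin 1 (Set.Ioo (0 : ℝ) 1)) ∧
    limsup (fun α : ℝ => ∑' i : ℤ, ((1 - α) / (1 + α)) * α ^ i.natAbs * c i)
        (nhdsWithin 1 (Set.Ioo (0 : ℝ) 1))
      ≤ limsup (fun N : ℕ => (2 * (N : ℝ) + 1)⁻¹ * ∑ i ∈ Finset.Icc (-(N : ℤ)) N, c i)
          atTop := by
  haveI : (nhdsWithin (1:ℝ) (Set.Ioo (0:ℝ) 1)).NeBot := Stmt15.neBotF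
  have hev_mem : ∀ᶠ α in nhdsWithin (1:ℝ) (Set.Ioo (0:ℝ) 1), α ∈ Set.Ioo (0:ℝ) 1 :=
    self_mem_nhdsWithin
  refine ⟨?_, ?_, ?_⟩
  · show liminf (sig c) atTop ≤ liminf (A c) (nhdsWithin 1 (Set.Ioo (0 : ℝ) 1))
    have hbdd' : ∀ i, |(fun i => -c i) i| ≤ M := fun i => by
      simpa [abs_neg] using hbdd i
    have h := Stmt15.main hbdd'
    have hA : A (fun i => -c i) = fun α => -(A c α) := by
      funext α
      rw [A, A, ← tsum_neg]
      exact tsum_congr fun i => by ring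
    have hs : sig (fun i => -c i) = fun N => -(sig c N) := by
      funext N
      rw [sig, sig]
      rw [Finset.sum_neg_distrib]
      ring
    rw [hA, hs, limsup_neg', limsup_neg'] at h
    linarith
  · show liminf (A c) (nhdsWithin 1 (Set.Ioo (0 : ℝ) 1))
        ≤ limsup (A c) (nhdsWithin 1 (Set.Ioo (0 : ℝ) 1))
    apply liminf_le_limsup
    · exact ⟨M, eventually_map.mpr (hev_mem.mono fun α hα => (abs_le.mp (absA hbdd hα)).2)⟩
    · exact ⟨-M, eventually_map.mpr (hev_mem.mono fun α hα => (abs_le.mp (absA hbdd hα)).1)⟩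
  · show limsup (A c) (nhdsWithin 1 (Set.Ioo (0 : ℝ) 1)) ≤ limsup (sig c) atTop
    exact Stmt15.main hbdd
end

section
/- Let D ⊆ ℝ^p be compact convex and g : D → ℝ continuous with convex minorant g_*. For two-sided sequences B = (β_i)_{i∈ℤ} in D, define, when it exists, ℓ(B) = lim_{N→∞} (1/(2N+1)) Σ_{i=−N}^N g(β_i). Then the infimum of ℓ(B) over all B for which the limit exists equals min_{β∈D} g_*(β) = min_{β∈D} g(β), and the set of Cesàro limit points (1/(2N+1))Σ_{i=−N}^N β_i of minimizing sequences is contained in Argmin(g_*) = conv̄(Argmin(g)). -/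
open Filter Set

theorem aux_isCompact_convexHull {p : ℕ} {S : Set (EuclideanSpace ℝ (Fin p))}
    (hS : IsCompact S) (hne : S.Nonempty) : IsCompact (convexHull ℝ S) := by
  classical
  obtain ⟨s₀, hs₀⟩ := hne
  set n := p + 1 with hn
  set Φ : (Fin n → ℝ) × (Fin n → EuclideanSpace ℝ (Fin p)) → EuclideanSpace ℝ (Fin p) :=
    fun q => ∑ i, q.1 i • q.2 i with hΦ
  have hΦc : Continuous Φ := by
    apply continuous_finset_sum
    intro i _
    exact ((continuous_apply i).comp continuous_fst).smul
      ((continuous_apply i).comp continuous_snd)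
  have hK : IsCompact ((stdSimplex ℝ (Fin n)) ×ˢ (Set.pi Set.univ fun _ : Fin n => S)) :=
    (isCompact_stdSimplex (𝕜 := ℝ) (ι := Fin n)).prod (isCompact_univ_pi fun _ => hS)
  have himg : convexHull ℝ S =
      Φ '' ((stdSimplex ℝ (Fin n)) ×ˢ (Set.pi Set.univ fun _ : Fin n => S)) := by
    apply Subset.antisymm
    · intro x hx
      obtain ⟨ι, hι, z, w, hzS, hai, hwpos, hwsum, hx⟩ :=
        eq_pos_convex_span_of_mem_convexHull hx
      have hcard : Fintype.card ι ≤ n := by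
        have h1 := hai.card_le_finrank_succ
        have h2 : Module.finrank ℝ ↥(vectorSpan ℝ (Set.range z)) ≤ p := by
          have := Submodule.finrank_le (vectorSpan ℝ (Set.range z))
          simpa using this
        omega
      obtain ⟨e⟩ : Nonempty (ι ↪ Fin n) := by
        rw [Function.Embedding.nonempty_iff_card_le]
        simpa using hcard
      set w' : Fin n → ℝ := fun j => if h : ∃ i, e i = j then w h.choose else 0 with hw'
      set x' : Fin n → EuclideanSpace ℝ (Fin p) :=
        fun j => if h : ∃ i, e i = j then z h.choose else s₀ with hx'
      have hwe : ∀ i, w' (e i) = w i := by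
        intro i
        have h : ∃ i', e i' = e i := ⟨i, rfl⟩
        have : h.choose = i := e.injective h.choose_spec
        simp [hw', dif_pos h, this]
      have hxe : ∀ i, x' (e i) = z i := by
        intro i
        have h : ∃ i', e i' = e i := ⟨i, rfl⟩
        have : h.choose = i := e.injective h.choose_spec
        simp [hx', dif_pos h, this]
      have hsub : ∀ (f : Fin n → EuclideanSpace ℝ (Fin p)),
          (∀ j, ¬(∃ i, e i = j) → f j = 0) → ∑ j, f j = ∑ i, f (e i) := by
        intro f hf
        rw [← Finset.sum_map Finset.univ e f]
        symm
        apply Finset.sum_subset (Finset.subset_univ _)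
        intro j _ hj
        apply hf
        rintro ⟨i, rfl⟩
        exact hj (Finset.mem_map_of_mem e (Finset.mem_univ i))
      have hsum1 : ∑ j, w' j = 1 := by
        have : ∀ (f : Fin n → ℝ), (∀ j, ¬(∃ i, e i = j) → f j = 0) → ∑ j, f j = ∑ i, f (e i) := by
          intro f hf
          rw [← Finset.sum_map Finset.univ e f]
          symm
          apply Finset.sum_subset (Finset.subset_univ _)
          intro j _ hj
          apply hf
          rintro ⟨i, rfl⟩
          exact hj (Finset.mem_map_of_mem e (Finset.mem_univ i))
        rw [this w' (fun j hj => by simp [hw', dif_neg hj])]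
        simp only [hwe]
        exact hwsum
      have hw0' : ∀ j, 0 ≤ w' j := by
        intro j
        simp only [hw']
        split_ifs with h
        · exact (hwpos _).le
        · exact le_rfl
      have hx'S : ∀ j, x' j ∈ S := by
        intro j
        simp only [hx']
        split_ifs with h
        · exact hzS ⟨_, rfl⟩
        · exact hs₀
      refine ⟨(w', x'), ⟨⟨fun j => hw0' j, hsum1⟩, fun j _ => hx'S j⟩, ?_⟩
      · show ∑ j, w' j • x' j = x
        rw [hsub (fun j => w' j • x' j) (fun j hj => by simp [hw', dif_neg hj])]
        simp only [hwe, hxe]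
        exact hx
    · rintro _ ⟨⟨w, y⟩, ⟨⟨hw0, hw1⟩, hy⟩, rfl⟩
      exact Convex.sum_mem (convex_convexHull ℝ S) (fun i _ => hw0 i) hw1
        (fun i _ => subset_convexHull ℝ S (hy i (Set.mem_univ i)))
  rw [himg]
  exact hK.image hΦc

set_option maxHeartbeats 1000000 in
theorem stmt16 {p : ℕ} (D : Set (EuclideanSpace ℝ (Fin p)))
    (hD : IsCompact D) (hDne : D.Nonempty) (hDconv : Convex ℝ D)
    (g : EuclideanSpace ℝ (Fin p) → ℝ) (hg : ContinuousOn g D)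
    (gstar : EuclideanSpace ℝ (Fin p) → ℝ)
    (hgstar : ∀ x, gstar x = sSup {z : ℝ | ∃ h : EuclideanSpace ℝ (Fin p) → ℝ,
      ConvexOn ℝ D h ∧ (∀ y ∈ D, h y ≤ g y) ∧ z = h x}) :
    sInf {ℓ : ℝ | ∃ B : ℤ → EuclideanSpace ℝ (Fin p), (∀ i, B i ∈ D) ∧
        Tendsto (fun N : ℕ => (2 * (N : ℝ) + 1)⁻¹ * ∑ i ∈ Finset.Icc (-(N : ℤ)) N, g (B i))
          atTop (nhds ℓ)}
      = sInf (gstar '' D) ∧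
    sInf (gstar '' D) = sInf (g '' D) ∧
    (∀ B : ℤ → EuclideanSpace ℝ (Fin p), (∀ i, B i ∈ D) →
      Tendsto (fun N : ℕ => (2 * (N : ℝ) + 1)⁻¹ * ∑ i ∈ Finset.Icc (-(N : ℤ)) N, g (B i))
        atTop (nhds (sInf (g '' D))) →
      ∀ β : EuclideanSpace ℝ (Fin p),
        MapClusterPt β atTop
          (fun N : ℕ => (2 * (N : ℝ) + 1)⁻¹ • ∑ i ∈ Finset.Icc (-(N : ℤ)) N, B i) →
        β ∈ {x | x ∈ D ∧ ∀ y ∈ D, gstar x ≤ gstar y}) ∧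
    {x | x ∈ D ∧ ∀ y ∈ D, gstar x ≤ gstar y}
      = closure (convexHull ℝ {x | x ∈ D ∧ ∀ y ∈ D, g x ≤ g y}) := by
  classical
  obtain ⟨x₀, hx₀D, hx₀min⟩ := hD.exists_isMinOn hDne hg
  have hx₀le : ∀ y ∈ D, g x₀ ≤ g y := fun y hy => hx₀min hy
  set m := sInf (g '' D) with hm
  have hbddg : BddBelow (g '' D) := (hD.image_of_continuousOn hg).bddBelow
  have hmD : ∀ x ∈ D, m ≤ g x := fun x hx => csInf_le hbddg ⟨x, hx, rfl⟩
  have hmx₀ : g x₀ = m := by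
    refine le_antisymm ?_ (hmD _ hx₀D)
    exact le_csInf (hDne.image g) (by rintro z ⟨y, hy, rfl⟩; exact hx₀le y hy)
  -- facts about gstar
  have hEconst : ∀ x : EuclideanSpace ℝ (Fin p),
      m ∈ {z : ℝ | ∃ h : EuclideanSpace ℝ (Fin p) → ℝ,
        ConvexOn ℝ D h ∧ (∀ y ∈ D, h y ≤ g y) ∧ z = h x} :=
    fun x => ⟨fun _ => m, convexOn_const m hDconv, fun y hy => hmD y hy, rfl⟩
  have hEbdd : ∀ x ∈ D, BddAbove {z : ℝ | ∃ h : EuclideanSpace ℝ (Fin p) → ℝ,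
      ConvexOn ℝ D h ∧ (∀ y ∈ D, h y ≤ g y) ∧ z = h x} := by
    rintro x hx
    exact ⟨g x, by rintro z ⟨h, _, hle, rfl⟩; exact hle x hx⟩
  have hge : ∀ x ∈ D, m ≤ gstar x := by
    intro x hx
    rw [hgstar x]
    exact le_csSup (hEbdd x hx) (hEconst x)
  have hle : ∀ x ∈ D, gstar x ≤ g x := by
    intro x hx
    rw [hgstar x]
    exact csSup_le ⟨m, hEconst x⟩ (by rintro z ⟨h, _, hle', rfl⟩; exact hle' x hx)
  have hgsx₀ : gstar x₀ = m := le_antisymm (by rw [← hmx₀]; exact hle x₀ hx₀D) (hge x₀ hx₀D)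
  -- conjunct 2
  have c2 : sInf (gstar '' D) = m :=
    IsLeast.csInf_eq ⟨⟨x₀, hx₀D, hgsx₀⟩, by rintro z ⟨y, hy, rfl⟩; exact hge y hy⟩
  -- cardinality of Icc
  have hcardR : ∀ N : ℕ, (((Finset.Icc (-(N : ℤ)) N).card : ℝ)) = 2 * (N : ℝ) + 1 := by
    intro N
    have h1 : (Finset.Icc (-(N : ℤ)) N).card = 2 * N + 1 := by
      rw [Int.card_Icc]; omega
    rw [h1]; push_cast; ring
  have hwpos : ∀ N : ℕ, (0 : ℝ) < (2 * (N : ℝ) + 1)⁻¹ := by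
    intro N; positivity
  -- conjunct 1
  have c1 : sInf {ℓ : ℝ | ∃ B : ℤ → EuclideanSpace ℝ (Fin p), (∀ i, B i ∈ D) ∧
      Tendsto (fun N : ℕ => (2 * (N : ℝ) + 1)⁻¹ * ∑ i ∈ Finset.Icc (-(N : ℤ)) N, g (B i))
        atTop (nhds ℓ)} = m := by
    apply IsLeast.csInf_eq
    constructor
    · refine ⟨fun _ => x₀, fun _ => hx₀D, ?_⟩
      have heq : ∀ N : ℕ,
          (2 * (N : ℝ) + 1)⁻¹ * ∑ _i ∈ Finset.Icc (-(N : ℤ)) N, g x₀ = m := by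
        intro N
        rw [Finset.sum_const, nsmul_eq_mul, hcardR N, hmx₀]
        have h0 : (2 * (N : ℝ) + 1) ≠ 0 := by positivity
        field_simp
      exact Tendsto.congr (fun N => (heq N).symm) tendsto_const_nhds
    · rintro ℓ ⟨B, hB, hT⟩
      apply ge_of_tendsto' hT
      intro N
      have h1 : (2 * (N : ℝ) + 1) * m ≤ ∑ i ∈ Finset.Icc (-(N : ℤ)) N, g (B i) := by
        have := Finset.card_nsmul_le_sum (Finset.Icc (-(N : ℤ)) N) (fun i => g (B i)) m
          (fun i _ => hmD _ (hB i))
        rwa [nsmul_eq_mul, hcardR N] at this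
      have h0 : (2 * (N : ℝ) + 1) ≠ 0 := by positivity
      calc m = (2 * (N : ℝ) + 1)⁻¹ * ((2 * (N : ℝ) + 1) * m) := by field_simp
        _ ≤ _ := mul_le_mul_of_nonneg_left h1 (hwpos N).le
  -- Argmin g
  set S := {x | x ∈ D ∧ ∀ y ∈ D, g x ≤ g y} with hS
  have hSchar : S = D ∩ g ⁻¹' (Iic m) := by
    ext x
    constructor
    · rintro ⟨hxD, hxmin⟩
      exact ⟨hxD, le_csInf (hDne.image g) (by rintro z ⟨y, hy, rfl⟩; exact hxmin y hy)⟩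
    · rintro ⟨hxD, hxle⟩
      exact ⟨hxD, fun y hy => le_trans hxle (hmD y hy)⟩
  have hSclosed : IsClosed S := by
    rw [hSchar]
    exact hg.preimage_isClosed_of_isClosed hD.isClosed isClosed_Iic
  have hScompact : IsCompact S := hD.of_isClosed_subset hSclosed (fun x hx => hx.1)
  have hx₀S : x₀ ∈ S := ⟨hx₀D, hx₀le⟩
  have hgS : ∀ x ∈ S, g x ≤ m := by
    intro x hx
    rw [hSchar] at hx
    exact hx.2
  set K := convexHull ℝ S with hK
  have hKcomp : IsCompact K := aux_isCompact_convexHull hScompact ⟨x₀, hx₀S⟩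
  have hKclosed : IsClosed K := hKcomp.isClosed
  have hKconv : Convex ℝ K := convex_convexHull ℝ S
  have hKD : K ⊆ D := convexHull_min (fun x hx => hx.1) hDconv
  have hSK : S ⊆ K := subset_convexHull ℝ S
  have hclK : closure K = K := hKclosed.closure_eq
  -- conjunct 4
  have c4 : {x | x ∈ D ∧ ∀ y ∈ D, gstar x ≤ gstar y} = closure K := by
    rw [hclK]
    apply Subset.antisymm
    · rintro x ⟨hxD, hxmin⟩
      by_contra hxK
      obtain ⟨f, u, hfx, hfK⟩ := geometric_hahn_banach_point_closed hKconv hKclosed hxK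
      set c₁ : ℝ := (f x + u) / 2 with hc₁
      have hfxc₁ : f x < c₁ := by rw [hc₁]; linarith
      have hc₁u : c₁ < u := by rw [hc₁]; linarith
      -- T : far side
      set T := D ∩ f ⁻¹' (Iic c₁) with hT
      have hTclosed : IsClosed T := hD.isClosed.inter (isClosed_Iic.preimage f.continuous)
      have hTcomp : IsCompact T := hD.of_isClosed_subset hTclosed inter_subset_left
      have hxT : x ∈ T := ⟨hxD, hfxc₁.le⟩
      obtain ⟨xμ, hxμT, hxμmin⟩ := hTcomp.exists_isMinOn ⟨x, hxT⟩
        (hg.mono inter_subset_left)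
      set μ := g xμ - m with hμ
      have hμpos : 0 < μ := by
        rcases lt_or_eq_of_le (hmD xμ hxμT.1) with h | h
        · simpa [hμ] using h
        · exfalso
          have hxμS : xμ ∈ S := by rw [hSchar]; exact ⟨hxμT.1, h.ge⟩
          have := hfK xμ (hSK hxμS)
          have h2 : f xμ ≤ c₁ := hxμT.2
          linarith
      -- lower bound of f on D
      obtain ⟨xm, hxmD, hxmmin⟩ := hD.exists_isMinOn hDne f.continuous.continuousOn
      set M := c₁ - f xm with hM
      have hMpos : 0 < M := by
        have : f xm ≤ f x := hxmmin hxD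
        rw [hM]; linarith
      set ε := μ / M with hε
      have hεpos : 0 < ε := div_pos hμpos hMpos
      set h : EuclideanSpace ℝ (Fin p) → ℝ := fun y => m + ε * ((c₁ - f y) ⊔ 0) with hh
      have hhconv : ConvexOn ℝ D h := by
        have haff : ConvexOn ℝ D (fun y => c₁ - f y) := by
          refine ⟨hDconv, fun y hy z hz a b ha hb hab => ?_⟩
          have hf : f (a • y + b • z) = a * f y + b * f z := by
            simp [map_add, map_smul, smul_eq_mul]
          have heq : a * (c₁ - f y) + b * (c₁ - f z) = c₁ - (a * f y + b * f z) := by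
            linear_combination c₁ * hab
          simp only [smul_eq_mul, hf]
          exact le_of_eq heq.symm
        have hsup : ConvexOn ℝ D (fun y => (c₁ - f y) ⊔ 0) :=
          haff.sup (convexOn_const 0 hDconv)
        have h1 : ConvexOn ℝ D ((fun _ => m) + fun y => ε • ((c₁ - f y) ⊔ 0)) :=
          (convexOn_const m hDconv).add (hsup.smul hεpos.le)
        exact h1
      have hhle : ∀ y ∈ D, h y ≤ g y := by
        intro y hy
        rcases le_or_gt (f y) c₁ with hcase | hcase
        · -- y ∈ T
          have hyT : y ∈ T := ⟨hy, hcase⟩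
          have h1 : μ ≤ g y - m := by
            have h0 : g xμ ≤ g y := isMinOn_iff.mp hxμmin y hyT
            simp only [hμ]
            linarith
          have h2 : (c₁ - f y) ⊔ 0 ≤ M := by
            have : f xm ≤ f y := hxmmin hy
            rw [sup_le_iff]
            constructor
            · rw [hM]; linarith
            · exact hMpos.le
          have h3 : ε * ((c₁ - f y) ⊔ 0) ≤ ε * M := mul_le_mul_of_nonneg_left h2 hεpos.le
          have h4 : ε * M = μ := by rw [hε]; field_simp
          rw [hh]
          simp only
          linarith
        · have h2 : (c₁ - f y) ⊔ 0 = 0 := by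
            rw [sup_eq_right]; linarith
          rw [hh]
          simp only [h2, mul_zero, add_zero]
          exact hmD y hy
      have hhx : m < h x := by
        have h1 : (c₁ - f x) ⊔ 0 = c₁ - f x := by rw [sup_eq_left]; linarith
        rw [hh]
        simp only [h1]
        nlinarith
      have : h x ≤ gstar x := by
        rw [hgstar x]
        exact le_csSup (hEbdd x hxD) ⟨h, hhconv, hhle, rfl⟩
      have hgsm : gstar x ≤ m := le_trans (hxmin x₀ hx₀D) hgsx₀.le
      linarith
    · intro x hxK
      have hxD : x ∈ D := hKD hxK
      have hgsle : gstar x ≤ m := by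
        rw [hgstar x]
        apply csSup_le ⟨m, hEconst x⟩
        rintro z ⟨h, hconv, hle', rfl⟩
        have hsub : S ⊆ {y | y ∈ D ∧ h y ≤ m} := by
          intro y hy
          exact ⟨hy.1, le_trans (hle' y hy.1) (hgS y hy)⟩
        have := convexHull_min hsub (hconv.convex_le m) hxK
        exact this.2
      exact ⟨hxD, fun y hy => le_trans hgsle (hge y hy)⟩
  -- conjunct 3
  have c3 : ∀ B : ℤ → EuclideanSpace ℝ (Fin p), (∀ i, B i ∈ D) →
      Tendsto (fun N : ℕ => (2 * (N : ℝ) + 1)⁻¹ * ∑ i ∈ Finset.Icc (-(N : ℤ)) N, g (B i))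
        atTop (nhds m) →
      ∀ β : EuclideanSpace ℝ (Fin p),
        MapClusterPt β atTop
          (fun N : ℕ => (2 * (N : ℝ) + 1)⁻¹ • ∑ i ∈ Finset.Icc (-(N : ℤ)) N, B i) →
        β ∈ {x | x ∈ D ∧ ∀ y ∈ D, gstar x ≤ gstar y} := by
    intro B hB hTend β hclust
    rw [c4, hclK]
    by_contra hβK
    -- setup
    have hKne : K.Nonempty := ⟨x₀, hSK hx₀S⟩
    set r := Metric.infDist β K with hr
    have hrpos : 0 < r := by
      rcases (Metric.infDist_nonneg (s := K) (x := β)).lt_or_eq with h | h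
      · exact h
      · exfalso
        apply hβK
        rw [← hclK]
        exact (Metric.mem_closure_iff_infDist_zero hKne).2 h.symm
    set ρ := r / 4 with hρdef
    have hρpos : 0 < ρ := by rw [hρdef]; positivity
    -- δ
    obtain ⟨δ, hδpos, hδ⟩ : ∃ δ > 0, ∀ x ∈ D, g x ≤ m + δ → Metric.infDist x S ≤ ρ := by
      set C := D ∩ {x | ρ ≤ Metric.infDist x S} with hC
      have hCclosed : IsClosed C :=
        hD.isClosed.inter (isClosed_le continuous_const (Metric.continuous_infDist_pt S))
      have hCcomp : IsCompact C := hD.of_isClosed_subset hCclosed inter_subset_left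
      rcases C.eq_empty_or_nonempty with hCe | hCne
      · refine ⟨1, one_pos, fun x hx _ => ?_⟩
        by_contra hcon
        have hxC : x ∈ C := ⟨hx, (lt_of_not_ge hcon).le⟩
        rw [hCe] at hxC
        exact hxC
      · obtain ⟨xc, hxcC, hxcmin⟩ := hCcomp.exists_isMinOn hCne (hg.mono inter_subset_left)
        have hxcpos : 0 < g xc - m := by
          rcases lt_or_eq_of_le (hmD xc hxcC.1) with h | h
          · linarith
          · exfalso
            have hxcS : xc ∈ S := by rw [hSchar]; exact ⟨hxcC.1, h.ge⟩
            have h0 : Metric.infDist xc S = 0 := Metric.infDist_zero_of_mem hxcS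
            have h1 : ρ ≤ Metric.infDist xc S := hxcC.2
            rw [h0] at h1
            linarith
        refine ⟨(g xc - m) / 2, by linarith, fun x hx hgx => ?_⟩
        by_contra hcon
        have hxC : x ∈ C := ⟨hx, (lt_of_not_ge hcon).le⟩
        have h1 : g xc ≤ g x := isMinOn_iff.mp hxcmin x hxC
        linarith
    -- bound R₁
    obtain ⟨R, hR⟩ := Metric.isBounded_iff.1 hD.isBounded
    set R₁ := R + 1 with hR₁
    have hR₁pos : 0 < R₁ := by
      have : (0:ℝ) ≤ R := le_trans dist_nonneg (hR hx₀D hx₀D)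
      linarith
    have hRD : ∀ x ∈ D, ∀ y ∈ D, dist x y ≤ R₁ := fun x hx y hy => by
      have := hR hx hy; linarith
    -- choose closest points in S
    have hchoice : ∀ i : ℤ, ∃ s ∈ S, Metric.infDist (B i) S = dist (B i) s :=
      fun i => hScompact.exists_infDist_eq_dist ⟨x₀, hx₀S⟩ (B i)
    set t : ℤ → EuclideanSpace ℝ (Fin p) := fun i => (hchoice i).choose with ht
    have htS : ∀ i, t i ∈ S := fun i => (hchoice i).choose_spec.1
    have htdist : ∀ i, dist (B i) (t i) = Metric.infDist (B i) S :=
      fun i => ((hchoice i).choose_spec.2).symm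
    have hper : ∀ i : ℤ, dist (B i) (t i) ≤ ρ + (R₁ / δ) * (g (B i) - m) := by
      intro i
      rcases le_or_gt (g (B i)) (m + δ) with hcase | hcase
      · have h1 : dist (B i) (t i) ≤ ρ := by
          rw [htdist i]; exact hδ (B i) (hB i) hcase
        have h2 : 0 ≤ (R₁ / δ) * (g (B i) - m) := by
          apply mul_nonneg (div_nonneg hR₁pos.le hδpos.le)
          linarith [hmD (B i) (hB i)]
        linarith
      · have h1 : dist (B i) (t i) ≤ R₁ := hRD _ (hB i) _ ((htS i).1)
        have h2 : R₁ ≤ (R₁ / δ) * (g (B i) - m) := by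
          rw [div_mul_eq_mul_div, le_div_iff₀ hδpos]
          nlinarith
        linarith
    -- the average of t's is in K
    set c : ℕ → EuclideanSpace ℝ (Fin p) :=
      fun N => (2 * (N : ℝ) + 1)⁻¹ • ∑ i ∈ Finset.Icc (-(N : ℤ)) N, t i with hc
    have hcK : ∀ N, c N ∈ K := by
      intro N
      rw [hc]
      simp only
      rw [Finset.smul_sum]
      apply hKconv.sum_mem (fun i _ => (hwpos N).le)
      · rw [Finset.sum_const, nsmul_eq_mul, hcardR N]
        field_simp
      · exact fun i _ => hSK (htS i)
    set a : ℕ → EuclideanSpace ℝ (Fin p) :=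
      fun N => (2 * (N : ℝ) + 1)⁻¹ • ∑ i ∈ Finset.Icc (-(N : ℤ)) N, B i with ha
    set avgG : ℕ → ℝ :=
      fun N => (2 * (N : ℝ) + 1)⁻¹ * ∑ i ∈ Finset.Icc (-(N : ℤ)) N, g (B i) with havgG
    -- key bound
    have key : ∀ N : ℕ, dist (a N) (c N) ≤ ρ + (R₁ / δ) * (avgG N - m) := by
      intro N
      set w := (2 * (N : ℝ) + 1)⁻¹ with hwdef
      have hw0 : (0:ℝ) < w := hwpos N
      have hw1 : w * (2 * (N : ℝ) + 1) = 1 := by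
        rw [hwdef]; field_simp
      have h1 : a N - c N = w • ∑ i ∈ Finset.Icc (-(N : ℤ)) N, (B i - t i) := by
        rw [ha, hc]
        simp only
        rw [← smul_sub, Finset.sum_sub_distrib]
      have h2 : dist (a N) (c N) ≤ w * ∑ i ∈ Finset.Icc (-(N : ℤ)) N, dist (B i) (t i) := by
        rw [dist_eq_norm, h1, norm_smul, Real.norm_eq_abs, abs_of_pos hw0]
        apply mul_le_mul_of_nonneg_left _ hw0.le
        refine le_trans (norm_sum_le _ _) ?_
        apply le_of_eq
        apply Finset.sum_congr rfl
        intro i _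
        rw [dist_eq_norm]
      have h3 : ∑ i ∈ Finset.Icc (-(N : ℤ)) N, dist (B i) (t i)
          ≤ ∑ i ∈ Finset.Icc (-(N : ℤ)) N, (ρ + (R₁ / δ) * (g (B i) - m)) :=
        Finset.sum_le_sum (fun i _ => hper i)
      have h4 : ∑ i ∈ Finset.Icc (-(N : ℤ)) N, (ρ + (R₁ / δ) * (g (B i) - m))
          = (2 * (N : ℝ) + 1) * ρ
            + (R₁ / δ) * ((∑ i ∈ Finset.Icc (-(N : ℤ)) N, g (B i)) - (2 * (N : ℝ) + 1) * m) := by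
        rw [Finset.sum_add_distrib, Finset.sum_const, nsmul_eq_mul, hcardR N, ← Finset.mul_sum,
          Finset.sum_sub_distrib, Finset.sum_const, nsmul_eq_mul, hcardR N]
      have h5 : w * ((2 * (N : ℝ) + 1) * ρ
            + (R₁ / δ) * ((∑ i ∈ Finset.Icc (-(N : ℤ)) N, g (B i)) - (2 * (N : ℝ) + 1) * m))
          = ρ + (R₁ / δ) * (avgG N - m) := by
        have havg : avgG N = w * ∑ i ∈ Finset.Icc (-(N : ℤ)) N, g (B i) := rfl
        rw [havg]
        linear_combination (ρ - R₁ / δ * m) * hw1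
      calc dist (a N) (c N)
          ≤ w * ∑ i ∈ Finset.Icc (-(N : ℤ)) N, dist (B i) (t i) := h2
        _ ≤ w * ((2 * (N : ℝ) + 1) * ρ
            + (R₁ / δ) * ((∑ i ∈ Finset.Icc (-(N : ℤ)) N, g (B i)) - (2 * (N : ℝ) + 1) * m)) := by
            rw [← h4]
            exact mul_le_mul_of_nonneg_left h3 hw0.le
        _ = ρ + (R₁ / δ) * (avgG N - m) := h5
    -- frequently close
    have hfreq : ∃ᶠ N in atTop, dist β (a N) < ρ := by
      have := (mapClusterPt_iff_frequently.mp hclust) (Metric.ball β ρ) (Metric.ball_mem_nhds _ hρpos)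
      apply this.mono
      intro N hN
      rw [Metric.mem_ball] at hN
      rw [dist_comm]
      exact hN
    have hev : ∀ᶠ N in atTop, (R₁ / δ) * (avgG N - m) ≤ ρ := by
      have h2 : Tendsto (fun N => (R₁ / δ) * (avgG N - m)) atTop
          (nhds ((R₁ / δ) * (m - m))) :=
        Tendsto.const_mul _ (hTend.sub tendsto_const_nhds)
      have h3 : Tendsto (fun N => (R₁ / δ) * (avgG N - m)) atTop (nhds 0) := by
        simpa using h2
      exact h3.eventually_le_const hρpos
    obtain ⟨N, hN1, hN2⟩ := (hfreq.and_eventually hev).exists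
    have hfin : r ≤ dist β (c N) := Metric.infDist_le_dist_of_mem (hcK N)
    have : dist β (c N) ≤ dist β (a N) + dist (a N) (c N) := dist_triangle _ _ _
    have hkey := key N
    linarith [hρdef]
  exact ⟨by rw [c1, c2], by rw [c2], c3, c4⟩
end
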